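/- arXiv:1806.10125 — 9 statements merged into one kernel-verified Lean document; each statement's English description precedes it below -/
import Mathlib

section
/- Let G be a finite-dimensional real solvable Lie algebra whose derived ideal G¹ = [G,G] has dimension 2. Then the linear span A_G of the restricted adjoint operators {a_X : X ∈ G} inside End(G¹) has dimension at most 2. -/
/-!
Since `a_⁅x, y⁆ = ⁅a_x, a_y⁆`, every `a_z` with `z ∈ G¹` is traceless on `G¹`. For a basis `e, f`
of the plane `G¹`, the traces of `a_e` and `a_f` are (up to sign) the two coordinates of `⁅e, f⁆`,
so `G¹` is abelian. Hence `⁅a_x, a_y⁆ = a_⁅x, y⁆ = 0`: `A_G` is a commutative space of operators on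
a plane. If some `A ∈ A_G` has a vector `v` with `v, A v` a basis, then `B ↦ B v` is injective on
`A_G`, because `B v = 0` forces `B (A v) = A (B v) = 0`; otherwise every element of `A_G` is a
scalar. Either way `dim A_G ≤ 2`.
-/

open Module

/-- The restriction to a Lie ideal `I` of the adjoint operator `ad X`,
as a linear endomorphism of `I`. -/
noncomputable def adRestrict {G : Type*} [LieRing G] [LieAlgebra ℝ G]
    (I : LieIdeal ℝ G) (X : G) : Module.End ℝ (I : Submodule ℝ G) :=
  (LieAlgebra.ad ℝ G X).restrict fun v hv => I.lie_mem hv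

/-- The span `A_G` of the restricted adjoint operators inside `End(G¹)`. -/
noncomputable def adSpan (G : Type*) [LieRing G] [LieAlgebra ℝ G] :
    Submodule ℝ (Module.End ℝ ((LieAlgebra.derivedSeries ℝ G 1 : LieIdeal ℝ G) : Submodule ℝ G)) :=
  Submodule.span ℝ (Set.range fun X : G => adRestrict (LieAlgebra.derivedSeries ℝ G 1) X)

theorem LinearMap.trace_eq_of_basis_fin_two {R M : Type*} [CommRing R] [AddCommGroup M]
    [Module R M] (b : Basis (Fin 2) R M) (f : Module.End R M) :
    LinearMap.trace R M f = b.repr (f (b 0)) 0 + b.repr (f (b 1)) 1 := by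
  rw [LinearMap.trace_eq_matrix_trace R b, Matrix.trace_fin_two, LinearMap.toMatrix_apply,
    LinearMap.toMatrix_apply]

theorem Module.End.eq_zero_of_commute_of_apply_eq_zero {R M : Type*} [Semiring R]
    [AddCommMonoid M] [Module R M] {f g : Module.End R M} {v : M}
    (hfg : Commute f g) (hv : Submodule.span R {v, f v} = ⊤) (hg : g v = 0) : g = 0 := by
  have hf : g (f v) = 0 := by
    rw [← Module.End.mul_apply, ← hfg.eq, Module.End.mul_apply, hg, map_zero]
  rw [← LinearMap.ker_eq_top, eq_top_iff, ← hv, Submodule.span_le]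
  rintro _ (rfl | rfl)
  exacts [hg, hf]

theorem Submodule.commute_of_mem_span {R A : Type*} [CommSemiring R] [Semiring A] [Algebra R A]
    {s : Set A} (hs : ∀ a ∈ s, ∀ b ∈ s, Commute a b) {a b : A}
    (ha : a ∈ Submodule.span R s) (hb : b ∈ Submodule.span R s) : Commute a b := by
  induction ha using Submodule.span_induction with
  | mem a ha =>
    induction hb using Submodule.span_induction with
    | mem b hb => exact hs a ha b hb
    | zero => exact Commute.zero_right a
    | add b c _ _ hb hc => exact hb.add_right hc
    | smul t b _ hb => exact hb.smul_right t
  | zero => exact Commute.zero_left b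
  | add a c _ _ ha hc => exact ha.add_left hc
  | smul t a _ ha => exact ha.smul_left t

theorem Submodule.finrank_le_two_of_commute {K V : Type*} [Field K] [AddCommGroup V]
    [Module K V] (hV : finrank K V = 2)
    (S : Submodule K (Module.End K V)) (hS : ∀ f ∈ S, ∀ g ∈ S, Commute f g) :
    finrank K S ≤ 2 := by
  have : FiniteDimensional K V := Module.finite_of_finrank_eq_succ hV
  by_cases hcyclic : ∃ f ∈ S, ∃ v, LinearIndependent K ![v, f v]
  · obtain ⟨f, hf, v, hli⟩ := hcyclic
    have hspan : Submodule.span K {v, f v} = ⊤ := by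
      rw [← Matrix.range_cons_cons_empty]
      exact hli.span_eq_top_of_card_eq_finrank (by simp [hV])
    let eval : S →ₗ[K] V := (LinearMap.applyₗ v).comp S.subtype
    have heval : Function.Injective eval := by
      rw [← LinearMap.ker_eq_bot, LinearMap.ker_eq_bot']
      intro g hg
      exact Subtype.ext (Module.End.eq_zero_of_commute_of_apply_eq_zero (hS f hf g g.2) hspan hg)
    exact hV ▸ LinearMap.finrank_le_finrank_of_injective heval
  · push Not at hcyclic
    have hscalar : S ≤ Submodule.span K {1} := by
      intro f hf
      obtain ⟨a, rfl⟩ := LinearMap.exists_eq_smul_id_of_forall_notLinearIndependent (hcyclic f hf)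
      exact Submodule.smul_mem _ a (Submodule.mem_span_singleton_self 1)
    calc finrank K S ≤ finrank K (Submodule.span K {(1 : Module.End K V)}) :=
          Submodule.finrank_mono hscalar
      _ ≤ 2 := (finrank_span_le_card _).trans (by simp)

open LieAlgebra LieModule in
theorem LieIdeal.lie_eq_zero_of_le_derivedSeries_of_finrank_eq_two {K L : Type*} [Field K]
    [LieRing L] [LieAlgebra K L] (I : LieIdeal K L)
    (hI : I ≤ derivedSeries K L 1) (h2 : finrank K I = 2) {x y : L} (hx : x ∈ I) (hy : y ∈ I) :
    ⁅x, y⁆ = 0 := by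
  have : Module.Finite K I := Module.finite_of_finrank_eq_succ h2
  let b : Basis (Fin 2) K I := Module.finBasisOfFinrankEq K I h2
  let bracket : I →ₗ[K] I →ₗ[K] I :=
    (toEnd K L I : L →ₗ[K] Module.End K I).comp (I : Submodule K L).subtype
  have htrace (i : Fin 2) : LinearMap.trace K I (bracket (b i)) = 0 :=
    trace_toEnd_eq_zero_of_mem_lcs K L I le_rfl (hI (b i).2)
  have hbracket (u v : I) : bracket u v = ⁅u, v⁆ := rfl
  have hw : ⁅b 0, b 1⁆ = 0 := by
    have h0 := htrace 0
    have h1 := htrace 1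
    simp only [LinearMap.trace_eq_of_basis_fin_two b, hbracket, lie_self, map_zero,
      Finsupp.coe_zero, Pi.zero_apply, zero_add, add_zero] at h0 h1
    rw [← lie_skew, map_neg, Finsupp.neg_apply, neg_eq_zero] at h1
    refine b.forall_coord_eq_zero_iff.mp fun i => ?_
    fin_cases i
    exacts [h1, h0]
  have hzero : bracket = 0 := by
    refine LinearMap.ext_basis b b fun i j => ?_
    fin_cases i <;> fin_cases j <;> simp [hbracket, hw, ← lie_skew (b 1)]
  exact congr(($hzero ⟨x, hx⟩ ⟨y, hy⟩ : L))

theorem commute_adRestrict {G : Type*} [LieRing G] [LieAlgebra ℝ G] {I : LieIdeal ℝ G} {x y : G}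
    (h : ∀ z ∈ I, ⁅⁅x, y⁆, z⁆ = 0) : Commute (adRestrict I x) (adRestrict I y) := by
  ext z
  exact sub_eq_zero.mp (lie_lie x y (z : G) ▸ h z z.2)

theorem finrank_adSpan_le_two_general
    (G : Type*) [LieRing G] [LieAlgebra ℝ G]
    (h2 : Module.finrank ℝ (LieAlgebra.derivedSeries ℝ G 1) = 2) :
    Module.finrank ℝ (adSpan G) ≤ 2 := by
  refine Submodule.finrank_le_two_of_commute h2 _ fun f hf g hg => ?_
  refine Submodule.commute_of_mem_span ?_ hf hg
  rintro _ ⟨x, rfl⟩ _ ⟨y, rfl⟩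
  refine commute_adRestrict fun z hz => ?_
  exact LieIdeal.lie_eq_zero_of_le_derivedSeries_of_finrank_eq_two _ le_rfl h2
    (LieSubmodule.lie_mem_lie (LieSubmodule.mem_top x) (LieSubmodule.mem_top y)) hz

/-- If `G` is a finite-dimensional real solvable Lie algebra whose derived
ideal `G¹ = [G,G]` is 2-dimensional, then `A_G = span {a_X : X ∈ G}` has dimension at
most `2`. -/
theorem finrank_adSpan_le_two
    (G : Type*) [LieRing G] [LieAlgebra ℝ G] [FiniteDimensional ℝ G]
    [LieAlgebra.IsSolvable G]
    (h2 : Module.finrank ℝ (LieAlgebra.derivedSeries ℝ G 1) = 2) :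
    Module.finrank ℝ (adSpan G) ≤ 2 :=
  finrank_adSpan_le_two_general G h2
end

section
/- Let G be a finite-dimensional real solvable Lie algebra whose derived ideal G¹ = [G,G] has dimension 2. Then G is not 2-step nilpotent if and only if the dimension of A_G is 1 or 2. -/
/-! `A_G = 0` says exactly that `[G,[G,G]] = 0`, and `[G,G] ≠ 0` since it is 2-dimensional, so
everything reduces to `dim A_G ≤ 2`. Each `a_X` is a derivation of the plane `G¹`.

If `G¹` is abelian, `a_X a_Y - a_Y a_X = a_[X,Y] = 0`. Commuting endomorphisms of a plane span
at most a plane: either all of them are scalar, or one of them, `T`, has a cyclic vector `v`, and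
`f ↦ f v` embeds the centralizer of `T` into the plane.

If `G¹` is not abelian, `[G¹,G¹] = K e` with `e ≠ 0`. A derivation `D` satisfies `D e = t e`,
so `[e, D x] = D [e, x] - [D e, x] = 0` because `[e, x]` is a multiple of `e`; as the
centralizer of `e` is `K e`, every derivation maps `G¹` into `K e`, and the derivations embed
into `Hom(G¹, K e)`, of dimension 2. -/

open Module

/-- A Lie algebra is 2-step nilpotent if `[G,[G,G]] = 0` while `[G,G] ≠ 0`. -/
def IsTwoStepNilpotent (G : Type*) [LieRing G] : Prop :=
  (∀ X Y Z : G, ⁅X, ⁅Y, Z⁆⁆ = 0) ∧ ∃ X Y : G, ⁅X, Y⁆ ≠ 0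

namespace LieIdeal

variable {R L : Type*} [CommRing R] [LieRing L] [LieAlgebra R L]

def adDerivation (I : LieIdeal R L) (x : L) : LieDerivation R I I where
  toLinearMap := (LieAlgebra.ad R L x).restrict fun _ hv => I.lie_mem hv
  leibniz' a b := by
    ext
    change ⁅x, ⁅(a : L), (b : L)⁆⁆ =
      ⁅(a : L), ⁅x, (b : L)⁆⁆ - ⁅(b : L), ⁅x, (a : L)⁆⁆
    rw [leibniz_lie, ← lie_skew (b : L), sub_neg_eq_add, add_comm]

lemma commute_adDerivation (I : LieIdeal R L) [IsLieAbelian I] {x y : L} (h : ⁅x, y⁆ ∈ I) :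
    Commute (I.adDerivation x : Module.End R I) (I.adDerivation y) := by
  refine LinearMap.ext fun z => Subtype.ext ?_
  change ⁅x, ⁅y, (z : L)⁆⁆ = ⁅y, ⁅x, (z : L)⁆⁆
  have hxyz : ⁅⁅x, y⁆, (z : L)⁆ = 0 :=
    congrArg Subtype.val (trivial_lie_zero I I ⟨_, h⟩ z)
  rw [leibniz_lie, hxyz, zero_add]

end LieIdeal

namespace LieAlgebra

variable {R L : Type*} [CommRing R] [LieRing L] [LieAlgebra R L]

lemma exists_lie_ne_zero_of_finrank_derivedSeries_ne_zero [Nontrivial R]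
    (h : finrank R (derivedSeries R L 1) ≠ 0) : ∃ x y : L, ⁅x, y⁆ ≠ 0 := by
  by_contra! hL
  have hbot : (derivedSeries R L 1 : Submodule R L) = ⊥ := by
    rw [coe_derivedSeries_one_eq, Submodule.span_eq_bot]
    rintro _ ⟨x, y, rfl⟩
    exact hL x y
  rw [LieIdeal.toLieSubalgebra_toSubmodule, LieSubmodule.toSubmodule_eq_bot] at hbot
  rw [hbot] at h
  exact h finrank_zero_of_subsingleton

end LieAlgebra

section Centralizer

variable {K V : Type*} [Field K] [AddCommGroup V] [Module K V]

theorem Module.End.finrank_centralizer_le_of_span_eq_top [FiniteDimensional K V]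
    {T : Module.End K V} {v : V}
    (hv : Submodule.span K (Set.range fun n : ℕ => (T ^ n) v) = ⊤) :
    finrank K (Subalgebra.centralizer K {T}) ≤ finrank K V := by
  let eval : Subalgebra.centralizer K {T} →ₗ[K] V :=
    LinearMap.applyₗ v ∘ₗ (Subalgebra.centralizer K {T}).val.toLinearMap
  refine LinearMap.finrank_le_finrank_of_injective (f := eval) ?_
  rw [injective_iff_map_eq_zero]
  rintro ⟨f, hf⟩ (hfv : f v = 0)
  have hTf : Commute T f := (Subalgebra.mem_centralizer_iff K).1 hf T rfl
  refine Subtype.ext (LinearMap.ext_on_range hv fun n => ?_)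
  change f ((T ^ n) v) = 0
  rw [← Module.End.mul_apply, ← (hTf.pow_left n).eq, Module.End.mul_apply, hfv, map_zero]

theorem Module.End.finrank_span_le_two_of_commute (hV : finrank K V = 2)
    {S : Set (Module.End K V)} (hS : ∀ f ∈ S, ∀ g ∈ S, Commute f g) :
    finrank K (Submodule.span K S) ≤ 2 := by
  have : FiniteDimensional K V := Module.finite_of_finrank_eq_succ hV
  by_cases hscalar : S ⊆ K ∙ (1 : Module.End K V)
  · calc finrank K (Submodule.span K S) ≤ finrank K (K ∙ (1 : Module.End K V)) :=
          Submodule.finrank_mono (Submodule.span_le.2 hscalar)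
      _ ≤ 2 := (finrank_span_le_card _).trans (by simp)
  obtain ⟨T, hT, hTscalar⟩ := Set.not_subset.1 hscalar
  obtain ⟨v, hv⟩ : ∃ v, LinearIndependent K ![v, T v] := by
    by_contra! h
    obtain ⟨a, rfl⟩ := LinearMap.exists_eq_smul_id_of_forall_notLinearIndependent h
    exact hTscalar (Submodule.smul_mem _ a (Submodule.mem_span_singleton_self 1))
  have hspan : Submodule.span K (Set.range fun n : ℕ => (T ^ n) v) = ⊤ := by
    refine eq_top_iff.2 ((hv.span_eq_top_of_card_eq_finrank' (by simp [hV])).ge.trans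
      (Submodule.span_mono ?_))
    rintro _ ⟨i, rfl⟩
    fin_cases i
    · exact ⟨0, by simp⟩
    · exact ⟨1, by simp⟩
  calc finrank K (Submodule.span K S)
      ≤ finrank K (Subalgebra.toSubmodule (Subalgebra.centralizer K {T})) :=
        Submodule.finrank_mono <| Submodule.span_le.2 fun f hf =>
          (Subalgebra.mem_centralizer_iff K).2 fun _ hg => by
            rw [Set.mem_singleton_iff.1 hg]; exact hS T hT f hf
    _ ≤ finrank K V := Module.End.finrank_centralizer_le_of_span_eq_top hspan
    _ = 2 := hV

end Centralizer

section TwoDimensional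

variable {K L : Type*} [Field K] [LieRing L] [LieAlgebra K L]

lemma linearIndependent_pair_of_lie_ne_zero {u v : L} (h : ⁅u, v⁆ ≠ 0) :
    LinearIndependent K ![u, v] := by
  refine LinearIndependent.pair_iff.2 fun s t hst => ⟨?_, ?_⟩
  · have hv := congrArg (⁅·, v⁆) hst
    simp only [add_lie, smul_lie, lie_self, smul_zero, add_zero, zero_lie] at hv
    exact (smul_eq_zero.1 hv).resolve_right h
  · have hu := congrArg (⁅u, ·⁆) hst
    simp only [lie_add, lie_smul, lie_self, smul_zero, zero_add, lie_zero] at hu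
    exact (smul_eq_zero.1 hu).resolve_right h

lemma lie_mem_span_lie_of_linearIndependent (hL : finrank K L = 2) {u v : L}
    (huv : LinearIndependent K ![u, v]) (x y : L) : ⁅x, y⁆ ∈ K ∙ ⁅u, v⁆ := by
  have : FiniteDimensional K L := Module.finite_of_finrank_eq_succ hL
  have hspan : Submodule.span K {u, v} = ⊤ := by
    simpa [Matrix.range_cons, Matrix.range_empty, Set.union_singleton, Set.pair_comm] using
      huv.span_eq_top_of_card_eq_finrank' (by simp [hL])
  obtain ⟨a, b, rfl⟩ := Submodule.mem_span_pair.1 (hspan ▸ Submodule.mem_top : x ∈ _)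
  obtain ⟨c, d, rfl⟩ := Submodule.mem_span_pair.1 (hspan ▸ Submodule.mem_top : y ∈ _)
  refine Submodule.mem_span_singleton.2 ⟨a * d - b * c, ?_⟩
  simp only [lie_add, add_lie, lie_smul, smul_lie, lie_self, smul_zero, zero_add, add_zero,
    ← lie_skew u v]
  module

lemma mem_span_lie_of_lie_eq_zero (hL : finrank K L = 2) {u v y : L} (huv : ⁅u, v⁆ ≠ 0)
    (hy : ⁅⁅u, v⁆, y⁆ = 0) : y ∈ K ∙ ⁅u, v⁆ := by
  by_contra hy'
  have hind : LinearIndependent K ![y, ⁅u, v⁆] :=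
    linearIndependent_fin2.2 ⟨huv, fun a ha => hy' (Submodule.mem_span_singleton.2 ⟨a, ha⟩)⟩
  have h := lie_mem_span_lie_of_linearIndependent hL hind u v
  rw [← lie_skew, hy, neg_zero, Submodule.span_singleton_eq_bot.2 rfl] at h
  exact huv ((Submodule.mem_bot K).1 h)

theorem LieDerivation.apply_mem_span_lie (hL : finrank K L = 2) (D : LieDerivation K L L)
    {u v : L} (huv : ⁅u, v⁆ ≠ 0) (x : L) : D x ∈ K ∙ ⁅u, v⁆ := by
  have hbr :=
    lie_mem_span_lie_of_linearIndependent hL (linearIndependent_pair_of_lie_ne_zero huv)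
  obtain ⟨t, ht⟩ : ∃ t : K, t • ⁅u, v⁆ = D ⁅u, v⁆ :=
    Submodule.mem_span_singleton.1 <| by
      rw [D.apply_lie_eq_add]; exact add_mem (hbr _ _) (hbr _ _)
  obtain ⟨s, hs⟩ := Submodule.mem_span_singleton.1 (hbr ⁅u, v⁆ x)
  refine mem_span_lie_of_lie_eq_zero hL huv ?_
  have hD := D.apply_lie_eq_add ⁅u, v⁆ x
  rwa [← ht, smul_lie, ← hs, map_smul, ← ht, smul_comm, right_eq_add] at hD

theorem LieDerivation.finrank_le_two_of_not_isLieAbelian (hL : finrank K L = 2)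
    (hL' : ¬ IsLieAbelian L) :
    finrank K (LieDerivation K L L) ≤ 2 := by
  have : FiniteDimensional K L := Module.finite_of_finrank_eq_succ hL
  obtain ⟨u, v, huv⟩ : ∃ u v : L, ⁅u, v⁆ ≠ 0 := by
    by_contra! h
    exact hL' ⟨h⟩
  let restrict : LieDerivation K L L →ₗ[K] L →ₗ[K] K ∙ ⁅u, v⁆ :=
    { toFun D := (D : L →ₗ[K] L).codRestrict _ (D.apply_mem_span_lie hL huv)
      map_add' _ _ := rfl
      map_smul' _ _ := rfl }
  have hrestrict : Function.Injective restrict := fun D₁ D₂ h =>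
    LieDerivation.ext fun x => congrArg Subtype.val (LinearMap.congr_fun h x)
  calc finrank K (LieDerivation K L L) ≤ finrank K (L →ₗ[K] K ∙ ⁅u, v⁆) :=
        LinearMap.finrank_le_finrank_of_injective hrestrict
    _ = 2 := by rw [Module.finrank_linearMap, hL, finrank_span_singleton huv]

end TwoDimensional

section AdSpan

variable {G : Type*} [LieRing G] [LieAlgebra ℝ G]

lemma adRestrict_eq_zero_iff (I : LieIdeal ℝ G) (X : G) :
    adRestrict I X = 0 ↔ (I : Submodule ℝ G) ≤ LinearMap.ker (LieAlgebra.ad ℝ G X) :=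
  ⟨fun h z hz => congrArg Subtype.val (LinearMap.congr_fun h ⟨z, hz⟩),
    fun h => LinearMap.ext fun z => Subtype.ext (h z.2)⟩

lemma adSpan_eq_bot_iff : adSpan G = ⊥ ↔ ∀ X Y Z : G, ⁅X, ⁅Y, Z⁆⁆ = 0 := by
  simp only [adSpan, Submodule.span_eq_bot, Set.forall_mem_range, adRestrict_eq_zero_iff,
    LieAlgebra.coe_derivedSeries_one_eq, Submodule.span_le]
  simp only [Set.subset_def, Set.mem_ofPred_eq, SetLike.mem_coe, LinearMap.mem_ker,
    LieAlgebra.ad_apply, forall_exists_index]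
  exact ⟨fun h X Y Z => h X _ Y Z rfl, fun h X _ Y Z hYZ => hYZ ▸ h X Y Z⟩

lemma finrank_adSpan_le_two_s3 (h2 : finrank ℝ (LieAlgebra.derivedSeries ℝ G 1) = 2) :
    finrank ℝ (adSpan G) ≤ 2 := by
  set I := LieAlgebra.derivedSeries ℝ G 1
  by_cases hI : IsLieAbelian I
  · refine Module.End.finrank_span_le_two_of_commute h2 ?_
    rintro _ ⟨X, rfl⟩ _ ⟨Y, rfl⟩
    exact I.commute_adDerivation
      (LieSubmodule.lie_mem_lie (LieSubmodule.mem_top X) (LieSubmodule.mem_top Y))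
  · have : FiniteDimensional ℝ I := Module.finite_of_finrank_eq_succ h2
    let toEnd : LieDerivation ℝ I I →ₗ[ℝ] Module.End ℝ (I : Submodule ℝ G) :=
      { toFun D := D.toLinearMap, map_add' _ _ := rfl, map_smul' _ _ := rfl }
    have := Module.Finite.range toEnd
    calc finrank ℝ (adSpan G) ≤ finrank ℝ (LinearMap.range toEnd) :=
          Submodule.finrank_mono <| Submodule.span_le.2 <| by
            rintro _ ⟨X, rfl⟩
            exact ⟨I.adDerivation X, rfl⟩
      _ ≤ finrank ℝ (LieDerivation ℝ I I) := LinearMap.finrank_range_le _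
      _ ≤ 2 := LieDerivation.finrank_le_two_of_not_isLieAbelian h2 hI

end AdSpan

theorem not_twoStepNilpotent_iff_finrank_adSpan_general
    (G : Type*) [LieRing G] [LieAlgebra ℝ G]
    (h2 : Module.finrank ℝ (LieAlgebra.derivedSeries ℝ G 1) = 2) :
    ¬ IsTwoStepNilpotent G ↔
      Module.finrank ℝ (adSpan G) = 1 ∨ Module.finrank ℝ (adSpan G) = 2 := by
  have : FiniteDimensional ℝ
      ((LieAlgebra.derivedSeries ℝ G 1 : LieIdeal ℝ G) : Submodule ℝ G) :=
    Module.finite_of_finrank_eq_succ h2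
  have hle := finrank_adSpan_le_two_s3 h2
  have hbracket :=
    LieAlgebra.exists_lie_ne_zero_of_finrank_derivedSeries_ne_zero (h2 ▸ two_ne_zero)
  rw [IsTwoStepNilpotent, ← adSpan_eq_bot_iff, ← Submodule.finrank_eq_zero]
  simp only [hbracket, and_true]
  omega

/-- If `G` is a finite-dimensional real solvable Lie algebra whose derived
ideal `G¹ = [G,G]` is 2-dimensional, then `G` is not 2-step nilpotent iff
`dim A_G ∈ {1, 2}`. -/
theorem not_twoStepNilpotent_iff_finrank_adSpan
    (G : Type*) [LieRing G] [LieAlgebra ℝ G] [FiniteDimensional ℝ G]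
    [LieAlgebra.IsSolvable G]
    (h2 : Module.finrank ℝ (LieAlgebra.derivedSeries ℝ G 1) = 2) :
    ¬ IsTwoStepNilpotent G ↔
      Module.finrank ℝ (adSpan G) = 1 ∨ Module.finrank ℝ (adSpan G) = 2 :=
  not_twoStepNilpotent_iff_finrank_adSpan_general G h2
end

section
/- Let G be a finite-dimensional real solvable Lie algebra of dimension n ≥ 3 such that its derived ideal G¹ = [G,G] has dimension 2, A_G has dimension 1, and A_G = span{a_{X₃}} for some X₃ ∈ G with a_{X₃} a bijective (non-singular) endomorphism of G¹. Then there exist Lie ideals H and Z of G with H ∩ Z = 0 and H + Z = G, such that dim H = 3, G¹ ⊆ H, Z is contained in the center of G, and dim Z = n − 3. -/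
open Module

section Aux
variable {G : Type*} [LieRing G] [LieAlgebra ℝ G] (I : LieIdeal ℝ G)

lemma adRestrict_apply_coe (X : G) (v : (I : Submodule ℝ G)) :
    (adRestrict I X v : G) = ⁅X, (v : G)⁆ := rfl

/-- `X ↦ adRestrict I X` as a linear map. -/
noncomputable def adRestrictₗ : G →ₗ[ℝ] Module.End ℝ (I : Submodule ℝ G) where
  toFun := adRestrict I
  map_add' X Y := by
    ext v
    simp only [LinearMap.add_apply, Submodule.coe_add, adRestrict_apply_coe, add_lie]
  map_smul' c X := by
    ext v
    simp only [RingHom.id_apply, LinearMap.smul_apply, SetLike.val_smul, adRestrict_apply_coe,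
      smul_lie]

lemma adRestrict_add (X Y : G) :
    adRestrict I (X + Y) = adRestrict I X + adRestrict I Y :=
  map_add (adRestrictₗ I) X Y

lemma adRestrict_smul (c : ℝ) (X : G) :
    adRestrict I (c • X) = c • adRestrict I X :=
  map_smul (adRestrictₗ I) c X

lemma adRestrict_sub (X Y : G) :
    adRestrict I (X - Y) = adRestrict I X - adRestrict I Y :=
  map_sub (adRestrictₗ I) X Y

lemma adRestrict_zero : adRestrict I (0 : G) = 0 :=
  map_zero (adRestrictₗ I)

lemma adRestrict_lie (X Y : G) :
    adRestrict I ⁅X, Y⁆ =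
      adRestrict I X * adRestrict I Y - adRestrict I Y * adRestrict I X := by
  ext v
  simp only [LinearMap.sub_apply, Module.End.mul_apply, AddSubgroupClass.coe_sub,
    adRestrict_apply_coe]
  exact lie_lie X Y (v : G)

end Aux

/-- If `G` is an `n`-dimensional (`n ≥ 3`) real solvable Lie algebra with
`dim G¹ = 2`, `dim A_G = 1`, `A_G = span {a_{X₃}}` for some `X₃` with `a_{X₃}` bijective,
then `G` splits as the direct sum of a 3-dimensional ideal `H` containing `G¹` and a
central ideal `Z` of dimension `n - 3`. -/
theorem decomposition_of_adSpan_dim_one_nonsingular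
    (G : Type*) [LieRing G] [LieAlgebra ℝ G] [FiniteDimensional ℝ G]
    [LieAlgebra.IsSolvable G] (n : ℕ) (hn : Module.finrank ℝ G = n) (hn3 : 3 ≤ n)
    (h2 : Module.finrank ℝ (LieAlgebra.derivedSeries ℝ G 1) = 2)
    (hA : Module.finrank ℝ (adSpan G) = 1)
    (X₃ : G)
    (hspan : (adSpan G : Submodule ℝ _) =
      Submodule.span ℝ {adRestrict (LieAlgebra.derivedSeries ℝ G 1) X₃})
    (hbij : Function.Bijective (adRestrict (LieAlgebra.derivedSeries ℝ G 1) X₃)) :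
    ∃ H Z : LieIdeal ℝ G,
      H ⊓ Z = ⊥ ∧ H ⊔ Z = ⊤ ∧
      Module.finrank ℝ H = 3 ∧
      LieAlgebra.derivedSeries ℝ G 1 ≤ H ∧
      Z ≤ LieAlgebra.center ℝ G ∧
      Module.finrank ℝ Z = n - 3 := by
  set D := LieAlgebra.derivedSeries ℝ G 1 with hDdef
  have hDrank : Module.finrank ℝ (D : Submodule ℝ G) = 2 := h2
  -- the derived ideal is nontrivial
  haveI : Nontrivial (D : Submodule ℝ G) := by
    apply Module.nontrivial_of_finrank_pos (R := ℝ)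
    rw [hDrank]; norm_num
  -- a₃ ≠ 0
  have ha₃ : adRestrict D X₃ ≠ 0 := by
    intro h
    obtain ⟨x, hx⟩ := exists_ne (0 : (D : Submodule ℝ G))
    have hx2 : adRestrict D X₃ x = adRestrict D X₃ 0 := by rw [h]; rfl
    exact hx (hbij.injective hx2)
  -- every adRestrict is a multiple of a₃
  have hcoef : ∀ X : G, ∃ c : ℝ, adRestrict D X = c • adRestrict D X₃ := by
    intro X
    have hmem : adRestrict D X ∈ adSpan G := Submodule.subset_span ⟨X, rfl⟩
    rw [hspan] at hmem
    obtain ⟨c, hc⟩ := Submodule.mem_span_singleton.mp hmem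
    exact ⟨c, hc.symm⟩
  -- brackets are killed
  have hcomm : ∀ X Y : G, adRestrict D ⁅X, Y⁆ = 0 := by
    intro X Y
    obtain ⟨c, hc⟩ := hcoef X
    obtain ⟨d, hd⟩ := hcoef Y
    rw [adRestrict_lie, hc, hd]
    rw [smul_mul_assoc, smul_mul_assoc, mul_smul_comm, mul_smul_comm,
      smul_smul, smul_smul, mul_comm c d, sub_self]
  -- D as a span of brackets
  have hDspan : (D : Submodule ℝ G) =
      Submodule.span ℝ {m : G | ∃ x ∈ (⊤ : LieIdeal ℝ G), ∃ y ∈ (⊤ : LieIdeal ℝ G), ⁅x, y⁆ = m} := by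
    have h1 : D = ⁅(⊤ : LieIdeal ℝ G), (⊤ : LieIdeal ℝ G)⁆ := by
      rw [hDdef]
      show LieAlgebra.derivedSeriesOfIdeal ℝ G 1 ⊤ = _
      rw [LieAlgebra.derivedSeriesOfIdeal_succ, LieAlgebra.derivedSeriesOfIdeal_zero]
    rw [h1, LieIdeal.toLieSubalgebra_toSubmodule]
    rw [LieSubmodule.lieIdeal_oper_eq_linear_span']
  -- adRestrict vanishes on D
  have hD0 : ∀ Y ∈ (D : Submodule ℝ G), adRestrict D Y = 0 := by
    intro Y hY
    rw [hDspan] at hY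
    induction hY using Submodule.span_induction with
    | mem m hm =>
        obtain ⟨x, -, y, -, rfl⟩ := hm
        exact hcomm x y
    | zero => exact adRestrict_zero D
    | add x y _ _ hx hy => rw [adRestrict_add, hx, hy, add_zero]
    | smul c x _ hx => rw [adRestrict_smul, hx, smul_zero]
  -- vanishing adRestrict means commuting with D
  have hkill : ∀ X : G, adRestrict D X = 0 → ∀ w ∈ (D : Submodule ℝ G), ⁅X, w⁆ = 0 := by
    intro X hX w hw
    have h0 : adRestrict D X ⟨w, hw⟩ = 0 := by rw [hX]; rfl
    exact congrArg Subtype.val h0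
  -- brackets lie in D
  have hbr : ∀ X Y : G, ⁅X, Y⁆ ∈ (D : Submodule ℝ G) := by
    intro X Y
    rw [hDspan]
    exact Submodule.subset_span ⟨X, trivial, Y, trivial, rfl⟩
  -- definitions of the two submodules
  set Zs : Submodule ℝ G :=
    LinearMap.ker (adRestrictₗ D) ⊓ LinearMap.ker (LieAlgebra.ad ℝ G X₃) with hZs
  set Hs : Submodule ℝ G := (D : Submodule ℝ G) ⊔ Submodule.span ℝ {X₃} with hHs
  have memZs : ∀ X : G, X ∈ Zs ↔ adRestrict D X = 0 ∧ ⁅X₃, X⁆ = 0 := by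
    intro X
    rw [hZs, Submodule.mem_inf, LinearMap.mem_ker, LinearMap.mem_ker, LieAlgebra.ad_apply]
    exact Iff.rfl
  -- the sup is everything
  have hsup : Hs ⊔ Zs = ⊤ := by
    rw [eq_top_iff]
    intro Y _
    obtain ⟨c, hc⟩ := hcoef Y
    set W := Y - c • X₃ with hW
    have haW : adRestrict D W = 0 := by
      rw [hW, adRestrict_sub, adRestrict_smul, hc, sub_self]
    obtain ⟨w, hw⟩ := hbij.surjective ⟨⁅X₃, W⁆, hbr X₃ W⟩
    set W' := W - (w : G) with hW'
    have hW'Z : W' ∈ Zs := by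
      rw [memZs]
      constructor
      · rw [hW', adRestrict_sub, haW, hD0 _ w.2, sub_self]
      · have hwc : ⁅X₃, (w : G)⁆ = ⁅X₃, W⁆ := congrArg Subtype.val hw
        rw [hW', lie_sub, hwc, sub_self]
    have hY : Y = ((w : G) + c • X₃) + W' := by rw [hW', hW]; abel
    rw [hY]
    exact Submodule.add_mem _
      (Submodule.mem_sup_left (Submodule.add_mem _ (Submodule.mem_sup_left w.2)
        (Submodule.mem_sup_right (Submodule.smul_mem _ c (Submodule.mem_span_singleton_self X₃)))))
      (Submodule.mem_sup_right hW'Z)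
  -- elements of Zs are central
  have hcentral : ∀ X ∈ Zs, ∀ Y : G, ⁅Y, X⁆ = 0 := by
    intro X hX Y
    obtain ⟨haX, hX₃X⟩ := (memZs X).mp hX
    have hle : Hs ⊔ Zs ≤ LinearMap.ker (LieAlgebra.ad ℝ G X) := by
      refine sup_le (sup_le ?_ ?_) ?_
      · intro w hw
        simp only [LinearMap.mem_ker, LieAlgebra.ad_apply]
        exact hkill X haX w hw
      · rw [Submodule.span_le]
        rintro _ rfl
        simp only [SetLike.mem_coe, LinearMap.mem_ker, LieAlgebra.ad_apply]
        rw [← lie_skew, hX₃X, neg_zero]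
      · intro X' hX'
        obtain ⟨haX', hX₃X'⟩ := (memZs X').mp hX'
        simp only [SetLike.mem_coe, LinearMap.mem_ker, LieAlgebra.ad_apply]
        have hmem : ⁅X, X'⁆ ∈ (D : Submodule ℝ G) := hbr X X'
        have hval : adRestrict D X₃ ⟨⁅X, X'⁆, hmem⟩ = 0 := by
          refine Subtype.ext ?_
          show ⁅X₃, ⁅X, X'⁆⁆ = (0 : G)
          rw [leibniz_lie, hX₃X, hX₃X', zero_lie, lie_zero, add_zero]
        have h0 := hbij.injective (a₁ := ⟨⁅X, X'⁆, hmem⟩) (a₂ := 0)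
          (by rw [hval, map_zero])
        exact congrArg Subtype.val h0
    have hXY : ⁅X, Y⁆ = 0 := by
      have hYmem : Y ∈ Hs ⊔ Zs := by rw [hsup]; trivial
      have := hle hYmem
      rw [LinearMap.mem_ker, LieAlgebra.ad_apply] at this
      exact this
    rw [← lie_skew, hXY, neg_zero]
  -- disjointness
  have hdisj : Hs ⊓ Zs = ⊥ := by
    rw [eq_bot_iff]
    intro X hX
    obtain ⟨hXH, hXZ⟩ := Submodule.mem_inf.mp hX
    obtain ⟨haX, hX₃X⟩ := (memZs X).mp hXZ
    rw [hHs] at hXH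
    obtain ⟨w, hwD, s, hs, hws⟩ := Submodule.mem_sup.mp hXH
    obtain ⟨c, rfl⟩ := Submodule.mem_span_singleton.mp hs
    have hXw : adRestrict D X = c • adRestrict D X₃ := by
      rw [← hws, adRestrict_add, adRestrict_smul, hD0 _ hwD, zero_add]
    rw [haX] at hXw
    have hc0 : c = 0 := by
      rcases smul_eq_zero.mp hXw.symm with h | h
      · exact h
      · exact absurd h ha₃
    have hXD : X ∈ (D : Submodule ℝ G) := by
      rw [← hws, hc0, zero_smul, add_zero]; exact hwD
    have hval : adRestrict D X₃ ⟨X, hXD⟩ = 0 := by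
      refine Subtype.ext ?_
      show ⁅X₃, X⁆ = (0 : G)
      exact hX₃X
    have h0 := hbij.injective (a₁ := ⟨X, hXD⟩) (a₂ := 0) (by rw [hval, map_zero])
    have hX0 : X = 0 := congrArg Subtype.val h0
    rw [hX0]
    exact Submodule.zero_mem _
  -- X₃ facts
  have hX₃D : X₃ ∉ (D : Submodule ℝ G) := fun h => ha₃ (hD0 X₃ h)
  have hX₃0 : X₃ ≠ 0 := by
    rintro rfl
    exact ha₃ (adRestrict_zero D)
  -- D ⊓ span {X₃} = ⊥
  have hDX₃ : (D : Submodule ℝ G) ⊓ Submodule.span ℝ {X₃} = ⊥ := by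
    rw [eq_bot_iff]
    intro x hx
    obtain ⟨hxD, hxs⟩ := Submodule.mem_inf.mp hx
    obtain ⟨c, rfl⟩ := Submodule.mem_span_singleton.mp hxs
    rcases eq_or_ne c 0 with h | h
    · rw [h, zero_smul]; exact Submodule.zero_mem _
    · exfalso
      exact hX₃D (by simpa [h] using Submodule.smul_mem _ c⁻¹ hxD)
  -- finrank computations
  have hfinH : Module.finrank ℝ Hs = 3 := by
    have key := Submodule.finrank_sup_add_finrank_inf_eq
      (D : Submodule ℝ G) (Submodule.span ℝ {X₃})
    rw [hDX₃, finrank_bot, add_zero, hDrank, finrank_span_singleton hX₃0, ← hHs] at key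
    omega
  have hfinZ : Module.finrank ℝ Zs = n - 3 := by
    have key := Submodule.finrank_sup_add_finrank_inf_eq Hs Zs
    rw [hdisj, hsup, finrank_bot, add_zero, finrank_top, hn, hfinH] at key
    omega
  -- build the Lie ideals
  refine ⟨⟨Hs, fun {x m} hm => ?_⟩, ⟨Zs, fun {x m} hm => ?_⟩, ?_, ?_, ?_, ?_, ?_, ?_⟩
  · exact Submodule.mem_sup_left (hbr x m)
  · show ⁅x, m⁆ ∈ Zs
    rw [hcentral m hm x]
    exact Zs.zero_mem
  · rw [← LieSubmodule.toSubmodule_inj, LieSubmodule.inf_toSubmodule,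
      LieSubmodule.bot_toSubmodule]
    exact hdisj
  · rw [← LieSubmodule.toSubmodule_inj, LieSubmodule.sup_toSubmodule,
      LieSubmodule.top_toSubmodule]
    exact hsup
  · exact hfinH
  · intro x hx
    exact Submodule.mem_sup_left hx
  · intro x hx
    rw [LieModule.mem_maxTrivSubmodule]
    intro y
    exact hcentral x hx y
  · exact hfinZ
end

section
/- Every invertible 2×2 real matrix A is proportional similar to a matrix of one of the following forms: the diagonal matrix diag(1, λ) for some λ ∈ ℝ∖{0}; the matrix [[1,1],[0,1]]; or the rotation matrix [[cos φ, −sin φ],[sin φ, cos φ]] for some φ ∈ (0, π). -/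
/-!
Scalar factors are absorbed by proportional similarity, so `diag(a, e) = a • diag(1, e/a)`
settles diagonal matrices. Any other matrix has a cyclic vector, so it is similar to the
companion matrix `!![0, -d; 1, t]` of its characteristic polynomial `X² - t X + d`, where
`d ≠ 0` is the determinant. The sign of the discriminant `t² - 4d` decides the normal form:
distinct real roots `α ≠ β` give `diag(α, β) = α • diag(1, β/α)`, a double root `α` gives `α`
times the Jordan block, and complex roots `r e^{± iφ}` with `φ ∈ (0, π)` give `r` times the
rotation by `φ`.
-/

open Real

/-- Two square real matrices are *proportional similar* if `c • M = C⁻¹ * N * C` for some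
nonzero scalar `c` and invertible matrix `C`. -/
def PropSimilar {n : ℕ} (M N : Matrix (Fin n) (Fin n) ℝ) : Prop :=
  ∃ (c : ℝ) (C : Matrix (Fin n) (Fin n) ℝ), c ≠ 0 ∧ IsUnit C ∧ c • M = C⁻¹ * N * C

section PropSimilar

variable {n : ℕ} {L M N : Matrix (Fin n) (Fin n) ℝ}

theorem PropSimilar.trans (h₁ : PropSimilar L M) (h₂ : PropSimilar M N) : PropSimilar L N := by
  obtain ⟨c₁, C₁, hc₁, hC₁, e₁⟩ := h₁
  obtain ⟨c₂, C₂, hc₂, hC₂, e₂⟩ := h₂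
  refine ⟨c₂ * c₁, C₂ * C₁, mul_ne_zero hc₂ hc₁, hC₂.mul hC₁, ?_⟩
  rw [mul_smul, e₁, ← Matrix.smul_mul, ← Matrix.mul_smul, e₂, Matrix.mul_inv_rev]
  simp only [mul_assoc]

theorem propSimilar_of_mul_eq_mul {P : Matrix (Fin n) (Fin n) ℝ} (hP : IsUnit P)
    (h : M * P = P * N) : PropSimilar M N := by
  have hdet : IsUnit P.det := (Matrix.isUnit_iff_isUnit_det P).mp hP
  refine ⟨1, P⁻¹, one_ne_zero, Matrix.isUnit_nonsing_inv_iff.mpr hP, ?_⟩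
  rw [Matrix.nonsing_inv_nonsing_inv P hdet, one_smul, ← h,
    mul_assoc, Matrix.mul_nonsing_inv P hdet, mul_one]

theorem propSimilar_smul_self {a : ℝ} (ha : a ≠ 0) : PropSimilar (a • N) N :=
  ⟨a⁻¹, 1, inv_ne_zero ha, isUnit_one, by simp [smul_smul, inv_mul_cancel₀ ha]⟩

end PropSimilar

theorem Matrix.isUnit_of_fin_two {a b c d : ℝ} (h : a * d - b * c ≠ 0) :
    IsUnit !![a, b; c, d] := by
  rw [Matrix.isUnit_iff_isUnit_det, Matrix.det_fin_two_of]
  exact h.isUnit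

def PropSimilarToNormalForm (A : Matrix (Fin 2) (Fin 2) ℝ) : Prop :=
  (∃ l : ℝ, l ≠ 0 ∧ PropSimilar A !![1, 0; 0, l]) ∨
    PropSimilar A !![1, 1; 0, 1] ∨
    (∃ φ ∈ Set.Ioo (0 : ℝ) π,
      PropSimilar A !![Real.cos φ, -Real.sin φ; Real.sin φ, Real.cos φ])

theorem PropSimilarToNormalForm.of_propSimilar {A B : Matrix (Fin 2) (Fin 2) ℝ}
    (hB : PropSimilarToNormalForm B) (h : PropSimilar A B) : PropSimilarToNormalForm A := by
  rcases hB with ⟨l, hl, hB⟩ | hB | ⟨φ, hφ, hB⟩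
  · exact Or.inl ⟨l, hl, h.trans hB⟩
  · exact Or.inr (Or.inl (h.trans hB))
  · exact Or.inr (Or.inr ⟨φ, hφ, h.trans hB⟩)

theorem propSimilar_diagonal {α β : ℝ} (hα : α ≠ 0) :
    PropSimilar !![α, 0; 0, β] !![1, 0; 0, β / α] := by
  have : !![α, 0; 0, β] = α • !![1, 0; 0, β / α] := by
    ext i j; fin_cases i <;> fin_cases j <;> simp [mul_div_cancel₀ β hα]
  rw [this]
  exact propSimilar_smul_self hα

/-- The columns of the conjugating matrices are a cyclic vector `v` and `A v`. -/
theorem propSimilar_companion (A : Matrix (Fin 2) (Fin 2) ℝ) (hA : A 0 1 ≠ 0 ∨ A 1 0 ≠ 0) :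
    PropSimilar A !![0, -A.det; 1, A.trace] := by
  rw [Matrix.det_fin_two, Matrix.trace_fin_two]
  by_cases hc : A 1 0 = 0
  · have hb : A 0 1 ≠ 0 := hA.resolve_right (not_not.mpr hc)
    refine propSimilar_of_mul_eq_mul (P := !![0, A 0 1; 1, A 1 1])
      (Matrix.isUnit_of_fin_two (by simpa using hb)) ?_
    rw [Matrix.eta_fin_two A]
    ext i j; fin_cases i <;> fin_cases j <;> simp [Matrix.mul_apply, Fin.sum_univ_two] <;> ring
  · refine propSimilar_of_mul_eq_mul (P := !![1, A 0 0; 0, A 1 0])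
      (Matrix.isUnit_of_fin_two (by simpa using hc)) ?_
    rw [Matrix.eta_fin_two A]
    ext i j; fin_cases i <;> fin_cases j <;> simp [Matrix.mul_apply, Fin.sum_univ_two] <;> ring

theorem propSimilar_companion_of_roots_ne {α β : ℝ} (hα : α ≠ 0) (hαβ : α ≠ β) :
    PropSimilar !![0, -(α * β); 1, α + β] !![1, 0; 0, β / α] := by
  refine PropSimilar.trans (M := !![α, 0; 0, β]) ?_ (propSimilar_diagonal hα)
  refine propSimilar_of_mul_eq_mul (P := !![-β, -α; 1, 1])
    (Matrix.isUnit_of_fin_two fun h ↦ hαβ (by linarith)) ?_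
  ext i j; fin_cases i <;> fin_cases j <;> simp [Matrix.mul_apply, Fin.sum_univ_two]
  ring

theorem propSimilar_companion_of_double_root {α : ℝ} (hα : α ≠ 0) :
    PropSimilar !![0, -α ^ 2; 1, 2 * α] !![1, 1; 0, 1] := by
  refine PropSimilar.trans (M := α • !![1, 1; 0, 1]) ?_ (propSimilar_smul_self hα)
  refine propSimilar_of_mul_eq_mul (P := !![-α, 0; 1, 1])
    (Matrix.isUnit_of_fin_two (by simpa using hα)) ?_
  ext i j; fin_cases i <;> fin_cases j <;> simp [Matrix.mul_apply, Fin.sum_univ_two] <;> ring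

theorem propSimilar_companion_rotation {r φ : ℝ} (hr : r ≠ 0) (hφ : sin φ ≠ 0) :
    PropSimilar !![0, -r ^ 2; 1, 2 * r * cos φ] !![cos φ, -sin φ; sin φ, cos φ] := by
  refine PropSimilar.trans (M := r • !![cos φ, -sin φ; sin φ, cos φ]) ?_
    (propSimilar_smul_self hr)
  refine propSimilar_of_mul_eq_mul (P := !![0, -r; sin φ, cos φ])
    (Matrix.isUnit_of_fin_two (by simpa using mul_ne_zero hr hφ)) ?_
  ext i j; fin_cases i <;> fin_cases j <;> simp [Matrix.mul_apply, Fin.sum_univ_two]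
  · ring
  · ring
  · ring
  · linear_combination r * sin_sq_add_cos_sq φ

theorem exists_roots_ne_of_discrim_pos {t d : ℝ} (h : 4 * d < t ^ 2) :
    ∃ α β : ℝ, α ≠ β ∧ d = α * β ∧ t = α + β := by
  have hΔ : 0 ≤ t ^ 2 - 4 * d := by linarith
  have hs : 0 < √(t ^ 2 - 4 * d) := Real.sqrt_pos.mpr (by linarith)
  refine ⟨(t + √(t ^ 2 - 4 * d)) / 2, (t - √(t ^ 2 - 4 * d)) / 2, by linarith, ?_, by ring⟩
  linear_combination (1 / 4 : ℝ) * Real.sq_sqrt hΔ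

theorem exists_polar_of_discrim_neg {t d : ℝ} (h : t ^ 2 < 4 * d) :
    ∃ r φ : ℝ, 0 < r ∧ φ ∈ Set.Ioo 0 π ∧ d = r ^ 2 ∧ t = 2 * r * cos φ := by
  have hd : 0 < d := by nlinarith [sq_nonneg t]
  set r := √d
  have hr : 0 < r := Real.sqrt_pos.mpr hd
  have hr2 : r ^ 2 = d := Real.sq_sqrt hd.le
  have h2r : 0 < 2 * r := by linarith
  obtain ⟨ht₁, ht₂⟩ := abs_lt_of_sq_lt_sq' (a := t) (by linarith) h2r.le
  have hx₁ : -1 < t / (2 * r) := by rwa [lt_div_iff₀ h2r, neg_one_mul]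
  have hx₂ : t / (2 * r) < 1 := by rwa [div_lt_one h2r]
  refine ⟨r, Real.arccos (t / (2 * r)), hr, ⟨Real.arccos_pos.mpr hx₂, Real.arccos_lt_pi.mpr hx₁⟩,
    hr2.symm, ?_⟩
  rw [Real.cos_arccos hx₁.le hx₂.le]
  field_simp

theorem propSimilarToNormalForm_companion {t d : ℝ} (hd : d ≠ 0) :
    PropSimilarToNormalForm !![0, -d; 1, t] := by
  rcases lt_trichotomy (4 * d) (t ^ 2) with hΔ | hΔ | hΔ
  · obtain ⟨α, β, hαβ, rfl, rfl⟩ := exists_roots_ne_of_discrim_pos hΔ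
    exact Or.inl ⟨β / α, div_ne_zero (right_ne_zero_of_mul hd) (left_ne_zero_of_mul hd),
      propSimilar_companion_of_roots_ne (left_ne_zero_of_mul hd) hαβ⟩
  · obtain rfl : d = (t / 2) ^ 2 := by linear_combination hΔ / 4
    have ht : t / 2 ≠ 0 := pow_ne_zero_iff two_ne_zero |>.mp hd
    refine Or.inr (Or.inl ?_)
    simpa [mul_div_cancel₀] using propSimilar_companion_of_double_root ht
  · obtain ⟨r, φ, hr, hφ, rfl, rfl⟩ := exists_polar_of_discrim_neg hΔ
    exact Or.inr (Or.inr ⟨φ, hφ, propSimilar_companion_rotation hr.ne'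
      (sin_pos_of_pos_of_lt_pi hφ.1 hφ.2).ne'⟩)

/-- every invertible real 2×2 matrix is proportional similar to
`diag(1, λ)` with `λ ≠ 0`, to `[[1,1],[0,1]]`, or to a rotation matrix with angle
`φ ∈ (0, π)`. -/
theorem propSimilar_normal_forms_GL2 (A : Matrix (Fin 2) (Fin 2) ℝ) (hA : IsUnit A) :
    (∃ l : ℝ, l ≠ 0 ∧ PropSimilar A !![1, 0; 0, l]) ∨
    PropSimilar A !![1, 1; 0, 1] ∨
    (∃ φ ∈ Set.Ioo (0 : ℝ) π,
      PropSimilar A !![Real.cos φ, -Real.sin φ; Real.sin φ, Real.cos φ]) := by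
  have hdet : A.det ≠ 0 := ((Matrix.isUnit_iff_isUnit_det A).mp hA).ne_zero
  by_cases hdiag : A 0 1 = 0 ∧ A 1 0 = 0
  · rw [Matrix.det_fin_two, hdiag.1, zero_mul, sub_zero] at hdet
    rw [Matrix.eta_fin_two A, hdiag.1, hdiag.2]
    exact Or.inl ⟨A 1 1 / A 0 0, div_ne_zero (right_ne_zero_of_mul hdet)
      (left_ne_zero_of_mul hdet), propSimilar_diagonal (left_ne_zero_of_mul hdet)⟩
  · exact (propSimilarToNormalForm_companion hdet).of_propSimilar
      (propSimilar_companion A (not_and_or.mp hdiag))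
end

section
/- Let G be a finite-dimensional real solvable Lie algebra such that its derived ideal G¹ = [G,G] has dimension 2, A_G has dimension 1, and A_G = span{a_{X₃}} for some X₃ ∈ G with a_{X₃} ≠ 0 singular (i.e. a_{X₃} is a nonzero, non-injective endomorphism of G¹). Then dim G ≥ 4. -/
open Module

/-- If `G` is a finite-dimensional real solvable Lie algebra with
`dim G¹ = 2`, `dim A_G = 1`, and `A_G = span {a_{X₃}}` with `a_{X₃}` nonzero and
singular (not injective), then `dim G ≥ 4`. -/
theorem four_le_finrank_of_adSpan_singular
    (G : Type*) [LieRing G] [LieAlgebra ℝ G] [FiniteDimensional ℝ G]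
    [LieAlgebra.IsSolvable G]
    (h2 : Module.finrank ℝ (LieAlgebra.derivedSeries ℝ G 1) = 2)
    (hA : Module.finrank ℝ (adSpan G) = 1)
    (X₃ : G)
    (hspan : (adSpan G : Submodule ℝ _) =
      Submodule.span ℝ {adRestrict (LieAlgebra.derivedSeries ℝ G 1) X₃})
    (hne : adRestrict (LieAlgebra.derivedSeries ℝ G 1) X₃ ≠ 0)
    (hsing : ¬ Function.Injective (adRestrict (LieAlgebra.derivedSeries ℝ G 1) X₃)) :
    4 ≤ Module.finrank ℝ G := by
  classical
  set I : LieIdeal ℝ G := LieAlgebra.derivedSeries ℝ G 1 with hIdef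
  set p : Submodule ℝ G := (I : Submodule ℝ G) with hpdef
  set a : Module.End ℝ (I : Submodule ℝ G) := adRestrict I X₃ with hadef
  by_contra hcon
  push_neg at hcon
  -- every restricted adjoint is a multiple of `a`
  have hmul : ∀ X : G, ∃ c : ℝ, adRestrict I X = c • a := by
    intro X
    have : adRestrict I X ∈ adSpan G := Submodule.subset_span ⟨X, rfl⟩
    rw [hspan, Submodule.mem_span_singleton] at this
    obtain ⟨c, hc⟩ := this
    exact ⟨c, hc.symm⟩
  -- the image submodule in G
  set W : Submodule ℝ G := (LinearMap.range a).map p.subtype with hWdef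
  have hbrak : ∀ z : G, ∀ x : G, ∀ hx : x ∈ p, ⁅z, x⁆ ∈ W := by
    intro z x hx
    obtain ⟨c, hc⟩ := hmul z
    refine Submodule.mem_map.mpr ⟨(c • a) ⟨x, hx⟩, ?_, ?_⟩
    · have : a ⟨x, hx⟩ ∈ LinearMap.range a := ⟨⟨x, hx⟩, rfl⟩
      exact (LinearMap.range a).smul_mem c this
    · have : (adRestrict I z) ⟨x, hx⟩ = (c • a) ⟨x, hx⟩ := by rw [hc]
      have h2' := congrArg (Subtype.val) this
      exact h2'.symm
  -- finrank of the quotient is at most 1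
  have hquot : Module.finrank ℝ (G ⧸ p) ≤ 1 := by
    have := Submodule.finrank_quotient_add_finrank p
    have hp2 : Module.finrank ℝ p = 2 := h2
    omega
  obtain ⟨v, hv⟩ := finrank_le_one_iff.mp hquot
  obtain ⟨X, hX⟩ := Submodule.mkQ_surjective p v
  have hdec : ∀ y : G, ∃ c : ℝ, y - c • X ∈ p := by
    intro y
    obtain ⟨c, hc⟩ := hv (Submodule.mkQ p y)
    refine ⟨c, ?_⟩
    rw [← Submodule.Quotient.mk_eq_zero]
    have : Submodule.mkQ p (y - c • X) = 0 := by
      rw [map_sub, map_smul, hX, hc, sub_self]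
    simpa using this
  -- p is contained in W
  have hle : p ≤ W := by
    have hps : p = Submodule.span ℝ { m : G | ∃ x ∈ (⊤ : LieIdeal ℝ G), ∃ n ∈ (⊤ : LieIdeal ℝ G), ⁅x, n⁆ = m } := by
      rw [hpdef, hIdef]
      rw [show LieAlgebra.derivedSeries ℝ G 1 =
        ⁅(⊤ : LieIdeal ℝ G), (⊤ : LieIdeal ℝ G)⁆ from rfl]
      exact LieSubmodule.lieIdeal_oper_eq_linear_span' ..
    rw [hps]
    rw [Submodule.span_le]
    rintro m ⟨x, -, y, -, rfl⟩
    obtain ⟨s, hs⟩ := hdec x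
    obtain ⟨c, hc⟩ := hdec y
    have key : ⁅x, y⁆ = ⁅x - s • X, y - c • X⁆ - c • ⁅X, x - s • X⁆
        + s • ⁅X, y - c • X⁆ := by
      simp only [lie_sub, sub_lie, lie_smul, smul_lie, smul_sub, lie_self, smul_smul,
        smul_zero]
      rw [← lie_skew x X, ← lie_skew X y]
      module
    rw [key]
    exact W.add_mem (W.sub_mem (hbrak (x - s • X) _ hc)
        (W.smul_mem c (hbrak X _ hs))) (W.smul_mem s (hbrak X _ hc))
  -- rank of `a` is at most 1
  have hker : LinearMap.ker a ≠ ⊥ := by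
    intro h
    exact hsing (LinearMap.ker_eq_bot.mp h)
  have hkerpos : 0 < Module.finrank ℝ (LinearMap.ker a) := by
    rcases Nat.eq_zero_or_pos (Module.finrank ℝ (LinearMap.ker a)) with h0 | h0
    · exact absurd (Submodule.finrank_eq_zero.mp h0) hker
    · exact h0
  have hrn := LinearMap.finrank_range_add_finrank_ker a
  have hp2 : Module.finrank ℝ (I : Submodule ℝ G) = 2 := h2
  rw [hp2] at hrn
  have hra : Module.finrank ℝ (LinearMap.range a) ≤ 1 := by omega
  have hWle : Module.finrank ℝ W ≤ 1 := by
    have := Submodule.finrank_map_le p.subtype (LinearMap.range a)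
    exact le_trans this hra
  have : Module.finrank ℝ p ≤ Module.finrank ℝ W := Submodule.finrank_mono hle
  have hp2' : Module.finrank ℝ p = 2 := h2
  omega
end

section
/- Let G be a finite-dimensional real solvable Lie algebra of odd dimension n ≥ 5 whose derived ideal G¹ = [G,G] has dimension 2, and suppose G is not nilpotent. Then G is decomposable, i.e. there exist nonzero Lie ideals I and J of G with I ∩ J = 0 and I + J = G. -/
open Module

universe u

private lemma alt_skew {V : Type*} [AddCommGroup V] [Module ℝ V]
    (B : V →ₗ[ℝ] V →ₗ[ℝ] ℝ) (halt : ∀ v, B v v = 0) (u v : V) : B u v = - B v u := by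
  have h := halt (u + v)
  simp only [map_add, LinearMap.add_apply] at h
  rw [halt u, halt v] at h
  linarith

private lemma even_finrank_of_alt_nondeg : ∀ (n : ℕ) (V : Type u) (_ : AddCommGroup V),
    ∀ (_ : Module ℝ V) (_ : FiniteDimensional ℝ V), finrank ℝ V = n →
    ∀ B : V →ₗ[ℝ] V →ₗ[ℝ] ℝ, (∀ v, B v v = 0) → (∀ w : V, (∀ u, B u w = 0) → w = 0) →
    Even n := by
  intro n
  induction n using Nat.strong_induction_on with
  | _ n IH =>
  intro V _ _ _ hn B halt hnd
  rcases Nat.eq_zero_or_pos n with h0 | hpos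
  · simp [h0]
  have hnt : Nontrivial V := by
    have : 0 < finrank ℝ V := by omega
    exact Module.finrank_pos_iff.mp this
  obtain ⟨v, hv⟩ := exists_ne (0 : V)
  have hu0 : ¬ ∀ u, B u v = 0 := fun h => hv (hnd v h)
  push_neg at hu0
  obtain ⟨u0, hu0⟩ := hu0
  set u : V := (B u0 v)⁻¹ • u0 with hu
  have huv : B u v = 1 := by
    rw [hu]; simp only [map_smul, LinearMap.smul_apply, smul_eq_mul]
    field_simp
  have hvu : B v u = -1 := by
    rw [alt_skew B halt, huv]
  set V₁ : Submodule ℝ V := LinearMap.ker (B u) ⊓ LinearMap.ker (B v) with hV₁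
  have hmemV₁ : ∀ w : V, w ∈ V₁ ↔ B u w = 0 ∧ B v w = 0 := by
    intro w; simp [hV₁, LinearMap.mem_ker]
  have hdecomp : ∀ x : V, x - (- B v x) • u - (B u x) • v ∈ V₁ := by
    intro x
    rw [hmemV₁]
    constructor
    · simp only [map_sub, map_smul, smul_eq_mul]
      rw [halt u, huv]; ring
    · simp only [map_sub, map_smul, smul_eq_mul]
      rw [halt v, hvu]; ring
  set P : Submodule ℝ V := Submodule.span ℝ {u, v} with hP
  have hsup : V₁ ⊔ P = ⊤ := by
    rw [eq_top_iff]
    intro x _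
    have hy := hdecomp x
    have : x = (x - (- B v x) • u - (B u x) • v) + ((- B v x) • u + (B u x) • v) := by abel
    rw [this]
    exact Submodule.add_mem_sup hy (Submodule.mem_span_pair.mpr ⟨_, _, rfl⟩)
  have hinf : V₁ ⊓ P = ⊥ := by
    rw [eq_bot_iff]
    intro x hx
    have hx1 : x ∈ V₁ := hx.1
    obtain ⟨s, t, rfl⟩ := Submodule.mem_span_pair.mp hx.2
    rw [hmemV₁] at hx1
    obtain ⟨h1, h2⟩ := hx1
    simp only [map_add, map_smul, smul_eq_mul] at h1 h2
    rw [halt u, huv] at h1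
    rw [halt v, hvu] at h2
    have hs : s = 0 := by linarith
    have ht : t = 0 := by linarith
    simp [hs, ht]
  have hliuv : LinearIndependent ℝ ![u, v] := by
    rw [LinearIndependent.pair_iff]
    intro s t hst
    have h1 := congrArg (fun w => B w v) hst
    have h2 := congrArg (fun w => B u w) hst
    simp only [map_add, map_smul, LinearMap.add_apply, LinearMap.smul_apply, smul_eq_mul,
      map_zero, LinearMap.zero_apply] at h1 h2
    rw [huv] at h1
    rw [halt] at h1 h2
    rw [huv] at h2
    constructor <;> linarith
  have hfrP : finrank ℝ P = 2 := by
    have := finrank_span_eq_card (R := ℝ) hliuv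
    have hr : Set.range ![u, v] = {u, v} := by
      simp only [Matrix.range_cons, Matrix.range_empty, Set.union_empty, Set.union_singleton]
      exact Set.pair_comm v u
    rw [hr] at this
    rw [hP, this]
    simp
  have hrk : finrank ℝ V₁ + 2 = n := by
    have := Submodule.finrank_sup_add_finrank_inf_eq V₁ P
    rw [hsup, hinf, hfrP, finrank_bot, finrank_top] at this
    rw [hn] at this
    omega
  -- restricted form
  set B₁ : V₁ →ₗ[ℝ] V₁ →ₗ[ℝ] ℝ :=
    LinearMap.mk₂ ℝ (fun p q : V₁ => B p q)
      (fun p p' q => by simp)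
      (fun c p q => by simp)
      (fun p q q' => by simp)
      (fun c p q => by simp) with hB₁
  have halt₁ : ∀ p : V₁, B₁ p p = 0 := fun p => halt p
  have hnd₁ : ∀ w : V₁, (∀ q : V₁, B₁ q w = 0) → w = 0 := by
    intro w hw
    have hcoe : (w : V) = 0 := by
      apply hnd
      intro x
      have hy := hdecomp x
      have hxeq : x = (x - (- B v x) • u - (B u x) • v) + ((- B v x) • u + (B u x) • v) := by abel
      rw [hxeq]
      have h1 : B (x - (- B v x) • u - (B u x) • v) (w : V) = 0 := hw ⟨_, hy⟩
      have hw1 := (hmemV₁ w).mp w.2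
      simp only [map_add, map_smul, LinearMap.add_apply, LinearMap.smul_apply, smul_eq_mul]
      rw [h1, hw1.1, hw1.2]; ring
    exact Subtype.ext hcoe
  have heven₁ : Even (finrank ℝ V₁) := by
    refine IH (finrank ℝ V₁) ?_ V₁ _ _ inferInstance rfl B₁ halt₁ hnd₁
    omega
  rw [← hrk]
  exact heven₁.add even_two


private lemma commutant_finrank_le_two {V : Type*} [AddCommGroup V] [Module ℝ V]
    [FiniteDimensional ℝ V] (h2 : finrank ℝ V = 2) (W : Submodule ℝ (Module.End ℝ V))
    (hcomm : ∀ S ∈ W, ∀ T ∈ W, S * T = T * S) : finrank ℝ W ≤ 2 := by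
  classical
  have hnt : Nontrivial V := (Module.finrank_pos_iff (R := ℝ)).mp (by omega)
  by_cases hsc : ∀ T ∈ W, ∃ μ : ℝ, T = μ • (1 : Module.End ℝ V)
  · have hle : W ≤ Submodule.span ℝ {(1 : Module.End ℝ V)} := by
      intro T hT
      obtain ⟨μ, rfl⟩ := hsc T hT
      exact Submodule.smul_mem _ μ (Submodule.mem_span_singleton_self _)
    calc finrank ℝ W ≤ finrank ℝ (Submodule.span ℝ {(1 : Module.End ℝ V)}) :=
          Submodule.finrank_mono hle
      _ = 1 := finrank_span_singleton one_ne_zero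
      _ ≤ 2 := by omega
  · push_neg at hsc
    obtain ⟨T, hTW, hT⟩ := hsc
    have hex : ∃ v : V, LinearIndependent ℝ ![v, T v] := by
      by_contra hno
      push_neg at hno
      have heig : ∀ v : V, ∃ μ : ℝ, T v = μ • v := by
        intro v
        rcases eq_or_ne v 0 with rfl | hv
        · exact ⟨0, by simp⟩
        have h := hno v
        rw [LinearIndependent.pair_iff] at h
        push_neg at h
        obtain ⟨s, t, hst, hne⟩ := h
        rcases eq_or_ne t 0 with ht | ht
        · exfalso
          rw [ht, zero_smul, add_zero] at hst
          rcases smul_eq_zero.mp hst with h | h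
          · exact hne h ht
          · exact hv h
        · refine ⟨t⁻¹ * (-s), ?_⟩
          have h1 : t • T v = -(s • v) := eq_neg_of_add_eq_zero_right hst
          calc T v = t⁻¹ • (t • T v) := (inv_smul_smul₀ ht _).symm
            _ = t⁻¹ • (-(s • v)) := by rw [h1]
            _ = (t⁻¹ * (-s)) • v := by module
      set b : Basis (Fin 2) ℝ V := (finBasis ℝ V).reindex (finCongr h2) with hb
      obtain ⟨μ0, hμ0⟩ := heig (b 0)
      obtain ⟨μ1, hμ1⟩ := heig (b 1)
      obtain ⟨μ2, hμ2⟩ := heig (b 0 + b 1)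
      have hmap : T (b 0 + b 1) = μ0 • b 0 + μ1 • b 1 := by
        rw [map_add, hμ0, hμ1]
      rw [hμ2, smul_add] at hmap
      have hcoef : (μ2 - μ0) • b 0 + (μ2 - μ1) • b 1 = 0 := by
        rw [sub_smul, sub_smul]
        rw [← sub_eq_zero] at hmap
        linear_combination (norm := module) hmap
      have hli := b.linearIndependent
      rw [Fintype.linearIndependent_iff] at hli
      have hz := hli ![μ2 - μ0, μ2 - μ1] (by
        rw [Fin.sum_univ_two]
        simpa using hcoef)
      have e0 : μ2 - μ0 = 0 := by simpa using hz 0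
      have e1 : μ2 - μ1 = 0 := by simpa using hz 1
      apply hT μ0
      apply Module.Basis.ext b
      intro i
      fin_cases i
      · have : μ2 = μ0 := by linarith
        simp only [LinearMap.smul_apply, Module.End.one_apply]
        simpa using hμ0
      · have : μ1 = μ0 := by linarith
        simp only [LinearMap.smul_apply, Module.End.one_apply]
        rw [this] at hμ1
        simpa using hμ1
    obtain ⟨v, hli⟩ := hex
    have hsp : Submodule.span ℝ {v, T v} = ⊤ := by
      have hcard := finrank_span_eq_card (R := ℝ) hli
      have hr : Set.range ![v, T v] = {v, T v} := by
        simp only [Matrix.range_cons, Matrix.range_empty, Set.union_empty, Set.union_singleton]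
        exact Set.pair_comm (T v) v
      rw [hr] at hcard
      apply Submodule.eq_top_of_finrank_eq
      rw [hcard, h2]
      simp
    have hWle : W ≤ Submodule.span ℝ {(1 : Module.End ℝ V), T} := by
      intro S hS
      have hSv : S v ∈ Submodule.span ℝ {v, T v} := by rw [hsp]; trivial
      obtain ⟨α, β, hαβ⟩ := Submodule.mem_span_pair.mp hSv
      have hST : S = α • (1 : Module.End ℝ V) + β • T := by
        apply LinearMap.ext_on hsp
        intro x hx
        simp only [Set.mem_insert_iff, Set.mem_singleton_iff] at hx
        rcases hx with h | h <;> subst h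
        · simp only [LinearMap.add_apply, LinearMap.smul_apply, Module.End.one_apply]
          exact hαβ.symm
        · have hcommST := hcomm S hS T hTW
          simp only [LinearMap.add_apply, LinearMap.smul_apply, Module.End.one_apply]
          calc S (T v) = (S * T) v := rfl
            _ = (T * S) v := by rw [hcommST]
            _ = T (S v) := rfl
            _ = T (α • v + β • T v) := by rw [← hαβ]
            _ = α • T v + β • T (T v) := by rw [map_add, map_smul, map_smul]
      rw [hST]
      exact Submodule.add_mem _ (Submodule.smul_mem _ _ (Submodule.subset_span (by simp)))
        (Submodule.smul_mem _ _ (Submodule.subset_span (by simp)))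
    have hT0 : T ≠ 0 := by
      intro h
      exact hT 0 (by rw [h, zero_smul])
    have hfr : finrank ℝ (Submodule.span ℝ {(1 : Module.End ℝ V), T}) ≤ 2 := by
      have hins : Submodule.span ℝ {(1 : Module.End ℝ V), T}
          = Submodule.span ℝ {(1 : Module.End ℝ V)} ⊔ Submodule.span ℝ {T} := by
        rw [← Submodule.span_insert]
      have hsum := Submodule.finrank_sup_add_finrank_inf_eq
        (Submodule.span ℝ {(1 : Module.End ℝ V)}) (Submodule.span ℝ {T})
      have f1 : finrank ℝ (Submodule.span ℝ {(1 : Module.End ℝ V)}) = 1 :=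
        finrank_span_singleton one_ne_zero
      have f2 : finrank ℝ (Submodule.span ℝ {T}) = 1 := finrank_span_singleton hT0
      rw [hins]
      omega
    calc finrank ℝ W ≤ finrank ℝ (Submodule.span ℝ {(1 : Module.End ℝ V), T}) :=
          Submodule.finrank_mono hWle
      _ ≤ 2 := hfr

private lemma build_ideals {G : Type*} [LieRing G] [LieAlgebra ℝ G]
    (I' J' : Submodule ℝ G)
    (hI : ∀ (x m : G), m ∈ I' → ⁅x, m⁆ ∈ I')
    (hJ : ∀ (x m : G), m ∈ J' → ⁅x, m⁆ ∈ J')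
    (hIne : I' ≠ ⊥) (hJne : J' ≠ ⊥) (hinf : I' ⊓ J' = ⊥) (hsup : I' ⊔ J' = ⊤) :
    ∃ I J : LieIdeal ℝ G, I ≠ ⊥ ∧ J ≠ ⊥ ∧ I ⊓ J = ⊥ ∧ I ⊔ J = ⊤ := by
  refine ⟨⟨I', fun {x m} hm => hI x m hm⟩, ⟨J', fun {x m} hm => hJ x m hm⟩, ?_, ?_, ?_, ?_⟩
  · intro h
    exact hIne (by rw [← LieSubmodule.toSubmodule_eq_bot] at h; exact h)
  · intro h
    exact hJne (by rw [← LieSubmodule.toSubmodule_eq_bot] at h; exact h)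
  · apply LieSubmodule.toSubmodule_injective
    rw [LieSubmodule.inf_toSubmodule, LieSubmodule.bot_toSubmodule]
    exact hinf
  · apply LieSubmodule.toSubmodule_injective
    rw [LieSubmodule.sup_toSubmodule, LieSubmodule.top_toSubmodule]
    exact hsup

private lemma decomp_of_central {G : Type*} [LieRing G] [LieAlgebra ℝ G]
    [FiniteDimensional ℝ G]
    (D' : Submodule ℝ G) (hD : ∀ u v : G, ⁅u, v⁆ ∈ D') (hDne : D' ≠ ⊥)
    (z : G) (hz0 : z ≠ 0) (hzc : ∀ u : G, ⁅u, z⁆ = 0) (hzD : z ∉ D') :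
    ∃ I J : LieIdeal ℝ G, I ≠ ⊥ ∧ J ≠ ⊥ ∧ I ⊓ J = ⊥ ∧ I ⊔ J = ⊤ := by
  obtain ⟨W, hW⟩ := Submodule.exists_isCompl ((Submodule.span ℝ {z}) ⊔ D')
  apply build_ideals (Submodule.span ℝ {z}) (D' ⊔ W)
  · intro x m hm
    obtain ⟨t, rfl⟩ := Submodule.mem_span_singleton.mp hm
    rw [lie_smul, hzc x, smul_zero]
    exact Submodule.zero_mem _
  · intro x m _
    exact Submodule.mem_sup_left (hD x m)
  · rw [Ne, Submodule.span_singleton_eq_bot]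
    exact hz0
  · intro h
    exact hDne (le_bot_iff.mp (h ▸ le_sup_left))
  · rw [eq_bot_iff]
    intro x hx
    obtain ⟨t, rfl⟩ := Submodule.mem_span_singleton.mp hx.1
    obtain ⟨d, hd, w, hw, hdw⟩ := Submodule.mem_sup.mp hx.2
    have hwmem : w ∈ (Submodule.span ℝ {z} ⊔ D') ⊓ W := by
      constructor
      · have : w = t • z - d := by rw [← hdw]; abel
        rw [this]
        exact Submodule.sub_mem _
          (Submodule.mem_sup_left (Submodule.smul_mem _ _ (Submodule.mem_span_singleton_self z)))
          (Submodule.mem_sup_right hd)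
      · exact hw
    rw [hW.disjoint.eq_bot] at hwmem
    have hw0 : w = 0 := hwmem
    have htz : t • z = d := by rw [← hdw, hw0, add_zero]
    rcases eq_or_ne t 0 with rfl | ht
    · simp
    · exfalso
      apply hzD
      have : z = t⁻¹ • (t • z) := (inv_smul_smul₀ ht z).symm
      rw [this, htz]
      exact Submodule.smul_mem _ _ hd
  · rw [← sup_assoc]
    exact hW.codisjoint.eq_top


attribute [local instance] LieRing.ofAssociativeRing

set_option maxHeartbeats 2000000 in
/-- a non-nilpotent real solvable Lie algebra of odd dimension `n ≥ 5`
whose derived ideal is 2-dimensional is decomposable. -/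
theorem decomposable_of_odd_dim_not_nilpotent
    (G : Type*) [LieRing G] [LieAlgebra ℝ G] [FiniteDimensional ℝ G]
    [LieAlgebra.IsSolvable G]
    (hodd : Odd (Module.finrank ℝ G)) (h5 : 5 ≤ Module.finrank ℝ G)
    (h2 : Module.finrank ℝ (LieAlgebra.derivedSeries ℝ G 1) = 2)
    (hnotnilp : ¬ LieRing.IsNilpotent G) :
    ∃ I J : LieIdeal ℝ G, I ≠ ⊥ ∧ J ≠ ⊥ ∧ I ⊓ J = ⊥ ∧ I ⊔ J = ⊤ := by
  classical
  set D : LieIdeal ℝ G := LieAlgebra.derivedSeries ℝ G 1 with hDdef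
  have h2' : finrank ℝ ((LieSubmodule.toSubmodule D)) = 2 := h2
  have hbr : ∀ u v : G, ⁅u, v⁆ ∈ D := by
    intro u v
    have hDtop : D = ⁅(⊤ : LieIdeal ℝ G), (⊤ : LieIdeal ℝ G)⁆ := by
      rw [hDdef, LieAlgebra.derivedSeries_def, LieAlgebra.derivedSeriesOfIdeal_succ,
        LieAlgebra.derivedSeriesOfIdeal_zero]
    rw [hDtop]
    exact LieSubmodule.lie_mem_lie (LieSubmodule.mem_top u) (LieSubmodule.mem_top v)
  -- D is abelian
  have habD : ∀ u ∈ D, ∀ v ∈ D, ⁅u, v⁆ = (0 : G) := by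
    by_contra hcon
    push_neg at hcon
    obtain ⟨d1, hd1, d2, hd2, hne⟩ := hcon
    -- S = second derived series
    set S : LieIdeal ℝ G := LieAlgebra.derivedSeries ℝ G 2 with hSdef
    have hSDD : S = ⁅D, D⁆ := by
      rw [hSdef, hDdef, LieAlgebra.derivedSeries_def, LieAlgebra.derivedSeries_def]
      rw [show (2 : ℕ) = 1 + 1 from rfl, LieAlgebra.derivedSeriesOfIdeal_succ]
    have hbrS : ∀ u ∈ D, ∀ v ∈ D, ⁅u, v⁆ ∈ S := by
      intro u hu v hv
      rw [hSDD]
      exact LieSubmodule.lie_mem_lie hu hv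
    have hSle : S ≤ D := by rw [hSDD]; exact LieSubmodule.lie_le_left D D
    have hSne : S ≠ D := by
      intro heq
      have hall : ∀ k : ℕ, LieAlgebra.derivedSeries ℝ G (k + 1) = D := by
        intro k
        induction k with
        | zero => rw [← hDdef]
        | succ k ih =>
          rw [LieAlgebra.derivedSeries_def, LieAlgebra.derivedSeriesOfIdeal_succ,
            ← LieAlgebra.derivedSeries_def, ih, ← hSDD, heq]
      obtain ⟨k, hk⟩ := LieAlgebra.IsSolvable.solvable (R := ℝ) (L := G)
      have hDbot : D = ⊥ := by
        have h1 := hall k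
        rw [LieAlgebra.derivedSeries_def, LieAlgebra.derivedSeriesOfIdeal_succ,
          ← LieAlgebra.derivedSeries_def, hk] at h1
        rw [← h1]
        exact LieSubmodule.lie_bot _
      rw [hDbot, LieSubmodule.bot_toSubmodule] at h2'
      rw [finrank_bot] at h2'
      omega
    have hSlt : (LieSubmodule.toSubmodule S) < (LieSubmodule.toSubmodule D) := by
      rw [lt_iff_le_and_ne]
      exact ⟨hSle, fun h => hSne (LieSubmodule.toSubmodule_injective h)⟩
    have hfrS : finrank ℝ (LieSubmodule.toSubmodule S) ≤ 1 := by
      have := Submodule.finrank_lt_finrank_of_lt hSlt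
      omega
    -- S ≠ ⊥ since ⁅d1,d2⁆ ≠ 0
    have hSnebot : finrank ℝ (LieSubmodule.toSubmodule S) = 1 := by
      rcases Nat.lt_or_ge (finrank ℝ (LieSubmodule.toSubmodule S)) 1 with h | h
      · exfalso
        have h0 : finrank ℝ (LieSubmodule.toSubmodule S) = 0 := by omega
        rw [Submodule.finrank_eq_zero] at h0
        apply hne
        have hmem : ⁅d1, d2⁆ ∈ (LieSubmodule.toSubmodule S) := hbrS d1 hd1 d2 hd2
        rw [h0] at hmem
        simpa using hmem
      · omega
    -- pick spanning b
    obtain ⟨b, hbS, hb0⟩ : ∃ b ∈ (LieSubmodule.toSubmodule S), b ≠ (0 : G) := by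
      apply Submodule.exists_mem_ne_zero_of_ne_bot
      intro hbot
      rw [hbot, finrank_bot] at hSnebot
      omega
    have hspanb : Submodule.span ℝ {b} = (LieSubmodule.toSubmodule S) := by
      apply Submodule.eq_of_le_of_finrank_le
      · rw [Submodule.span_le, Set.singleton_subset_iff]; exact hbS
      · rw [finrank_span_singleton hb0, hSnebot]
    have hψ : ∀ g : G, ∃ t : ℝ, ⁅g, b⁆ = t • b := by
      intro g
      have : ⁅g, b⁆ ∈ (LieSubmodule.toSubmodule S) := S.lie_mem hbS
      rw [← hspanb] at this
      obtain ⟨t, ht⟩ := Submodule.mem_span_singleton.mp this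
      exact ⟨t, ht.symm⟩
    have hstep1 : ∀ g h : G, ⁅(⁅g, h⁆ : G), b⁆ = 0 := by
      intro g h
      obtain ⟨tg, htg⟩ := hψ g
      obtain ⟨th, hth⟩ := hψ h
      rw [lie_lie, hth, htg, lie_smul, lie_smul, htg, hth, smul_comm]
      abel
    -- the linear map w ↦ ⁅w, b⁆
    set T : G →ₗ[ℝ] G :=
      { toFun := fun w => ⁅w, b⁆
        map_add' := fun w w' => add_lie w w' b
        map_smul' := fun t w => smul_lie t w b } with hT
    have hstep2 : ∀ w ∈ D, ⁅w, b⁆ = (0 : G) := by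
      have hDle : (LieSubmodule.toSubmodule D) ≤ LinearMap.ker T := by
        have hDtop : D = ⁅(⊤ : LieIdeal ℝ G), (⊤ : LieIdeal ℝ G)⁆ := by
          rw [hDdef, LieAlgebra.derivedSeries_def, LieAlgebra.derivedSeriesOfIdeal_succ,
            LieAlgebra.derivedSeriesOfIdeal_zero]
        rw [hDtop, LieSubmodule.lieIdeal_oper_eq_linear_span, Submodule.span_le]
        rintro w ⟨x, n, rfl⟩
        rw [SetLike.mem_coe, LinearMap.mem_ker]
        exact hstep1 x n
      intro w hw
      exact hDle hw
    -- pick u ∈ D outside span b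
    have hnotle : ¬ ((LieSubmodule.toSubmodule D) ≤ Submodule.span ℝ {b}) := by
      intro hle
      have := Submodule.finrank_mono hle
      rw [h2', finrank_span_singleton hb0] at this
      omega
    obtain ⟨u, huD, hunot⟩ := Set.not_subset.mp (fun hsub => hnotle hsub)
    have hbD : b ∈ (LieSubmodule.toSubmodule D) := hSlt.le hbS
    have hliub : LinearIndependent ℝ ![b, u] := by
      rw [LinearIndependent.pair_iff]
      intro s t hst
      rcases eq_or_ne t 0 with rfl | ht
      · rw [zero_smul, add_zero] at hst
        rcases smul_eq_zero.mp hst with h | h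
        · exact ⟨h, rfl⟩
        · exact absurd h hb0
      · exfalso
        apply hunot
        have h1 : t • u = -(s • b) := eq_neg_of_add_eq_zero_right hst
        have : u = (t⁻¹ * (-s)) • b := by
          calc u = t⁻¹ • (t • u) := (inv_smul_smul₀ ht _).symm
            _ = t⁻¹ • (-(s • b)) := by rw [h1]
            _ = (t⁻¹ * (-s)) • b := by module
        rw [this]
        exact Submodule.smul_mem _ _ (Submodule.mem_span_singleton_self b)
    have hDspan : (LieSubmodule.toSubmodule D) = Submodule.span ℝ {b, u} := by
      symm
      apply Submodule.eq_of_le_of_finrank_le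
      · rw [Submodule.span_le]
        rintro w hw
        simp only [Set.mem_insert_iff, Set.mem_singleton_iff] at hw
        rcases hw with rfl | rfl
        · exact hbD
        · exact huD
      · rw [h2']
        have hcard := finrank_span_eq_card (R := ℝ) hliub
        have hr : Set.range ![b, u] = {b, u} := by
          simp only [Matrix.range_cons, Matrix.range_empty, Set.union_empty, Set.union_singleton]
          exact Set.pair_comm u b
        rw [hr] at hcard
        rw [hcard]
        simp
    -- now every bracket of elements of D vanishes
    apply hne
    have hd1' : d1 ∈ Submodule.span ℝ {b, u} := by rw [← hDspan]; exact hd1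
    have hd2' : d2 ∈ Submodule.span ℝ {b, u} := by rw [← hDspan]; exact hd2
    obtain ⟨s1, t1, h1⟩ := Submodule.mem_span_pair.mp hd1'
    obtain ⟨s2, t2, h2eq⟩ := Submodule.mem_span_pair.mp hd2'
    have hub : ⁅u, b⁆ = (0 : G) := hstep2 u huD
    have hbu : ⁅b, u⁆ = (0 : G) := by
      rw [← lie_skew, hub, neg_zero]
    have hbb : ⁅b, b⁆ = (0 : G) := lie_self b
    have huu : ⁅u, u⁆ = (0 : G) := lie_self u
    rw [← h1, ← h2eq]
    rw [add_lie, smul_lie, smul_lie, lie_add, lie_add, lie_smul, lie_smul, lie_smul, lie_smul,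
      hbb, hbu, hub, huu]
    simp
  -- set up restriction to D
  have hDSne : LieSubmodule.toSubmodule D ≠ ⊥ := by
    intro hbot
    rw [hbot, finrank_bot] at h2'
    omega
  have hbr' : ∀ u v : G, ⁅u, v⁆ ∈ LieSubmodule.toSubmodule D := hbr
  have hδ0 : ∀ d ∈ D, LieModule.toEnd ℝ G D d = 0 := by
    intro d hd
    ext m
    have hcoe : ((LieModule.toEnd ℝ G D d m : D) : G) = ⁅d, (m : G)⁆ := rfl
    have : ((LieModule.toEnd ℝ G D d m : D) : G) = 0 := by
      rw [hcoe]
      exact habD d hd (m : G) m.2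
    simpa using this
  have hδbr : ∀ g h : G, LieModule.toEnd ℝ G D ⁅g, h⁆ =
      LieModule.toEnd ℝ G D g * LieModule.toEnd ℝ G D h
        - LieModule.toEnd ℝ G D h * LieModule.toEnd ℝ G D g := by
    intro g h
    rw [LieHom.map_lie, Ring.lie_def]
  -- Engel: get x with non-nilpotent action on D
  have hforall : ¬ ∀ y : G, IsNilpotent (LieAlgebra.ad ℝ G y) := by
    rw [← LieAlgebra.isNilpotent_iff_forall]
    exact hnotnilp
  push_neg at hforall
  obtain ⟨x, hadx⟩ := hforall
  have hδx : ¬ IsNilpotent (LieModule.toEnd ℝ G D x) := by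
    rintro ⟨k, hk⟩
    apply hadx
    refine ⟨k + 1, ?_⟩
    ext v
    rw [pow_succ, Module.End.mul_apply]
    have hm : ⁅x, v⁆ ∈ D := hbr x v
    have h1 : (LieAlgebra.ad ℝ G x) v = ((⟨⁅x, v⁆, hm⟩ : D) : G) := by
      simp [LieAlgebra.ad_apply]
    rw [h1]
    have h2 : ((LieAlgebra.ad ℝ G x) ^ k) ((⟨⁅x, v⁆, hm⟩ : D) : G)
        = (((LieModule.toEnd ℝ G D x) ^ k) ⟨⁅x, v⁆, hm⟩ : G) := by
      rw [LieSubmodule.coe_toEnd_pow]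
      rfl
    rw [h2, hk]
    simp
  -- main case split
  by_cases hA : ∃ g : G, Function.Bijective (LieModule.toEnd ℝ G D g)
  · -- Case A
    obtain ⟨g, hg⟩ := hA
    set K : Submodule ℝ G := LinearMap.ker (LieAlgebra.ad ℝ G g) with hKdef
    have hKD : ∀ v : G, v ∈ K → v ∈ LieSubmodule.toSubmodule D → v = 0 := by
      intro v hvK hvD
      have h0 : LieModule.toEnd ℝ G D g ⟨v, hvD⟩ = 0 := by
        have : ((LieModule.toEnd ℝ G D g ⟨v, hvD⟩ : D) : G) = ⁅g, v⁆ := rfl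
        have hgv : ⁅g, v⁆ = (0 : G) := hvK
        have : ((LieModule.toEnd ℝ G D g ⟨v, hvD⟩ : D) : G) = 0 := by rw [this, hgv]
        exact Subtype.ext this
      have := hg.injective (by rw [h0, map_zero] : LieModule.toEnd ℝ G D g ⟨v, hvD⟩ = LieModule.toEnd ℝ G D g 0)
      simpa using congrArg (Subtype.val) this
    have hKfr : finrank ℝ G - 2 ≤ finrank ℝ K := by
      have hrn := LinearMap.finrank_range_add_finrank_ker (LieAlgebra.ad ℝ G g : G →ₗ[ℝ] G)
      have hrle : LinearMap.range (LieAlgebra.ad ℝ G g : G →ₗ[ℝ] G) ≤ LieSubmodule.toSubmodule D := by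
        rintro w ⟨v, rfl⟩
        exact hbr' g v
      have := Submodule.finrank_mono hrle
      rw [h2'] at this
      rw [← hKdef] at hrn
      omega
    have hKab : ∀ v ∈ K, ∀ w ∈ K, ⁅v, w⁆ = (0 : G) := by
      intro v hv w hw
      apply hKD _ _ (hbr' v w)
      have hv' : ⁅g, v⁆ = (0 : G) := hv
      have hw' : ⁅g, w⁆ = (0 : G) := hw
      have : ⁅g, ⁅v, w⁆⁆ = (0 : G) := by
        rw [leibniz_lie, hv', hw']
        simp
      exact this
    set Φ : K →ₗ[ℝ] Module.End ℝ D :=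
      (LieModule.toEnd ℝ G D).toLinearMap.comp K.subtype with hΦdef
    have hΦapp : ∀ k : K, Φ k = LieModule.toEnd ℝ G D (k : G) := fun k => rfl
    have hWcomm : ∀ S ∈ LinearMap.range Φ, ∀ T ∈ LinearMap.range Φ, S * T = T * S := by
      rintro S ⟨k1, rfl⟩ T ⟨k2, rfl⟩
      rw [hΦapp, hΦapp]
      have h0 := hδbr (k1 : G) (k2 : G)
      have hz : ⁅(k1 : G), (k2 : G)⁆ = (0 : G) := hKab _ k1.2 _ k2.2
      rw [hz] at h0
      have h00 : (LieModule.toEnd ℝ G D) (0 : G) = 0 := by simp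
      rw [h00] at h0
      exact sub_eq_zero.mp h0.symm
    have hWfr : finrank ℝ (LinearMap.range Φ) ≤ 2 :=
      commutant_finrank_le_two h2 (LinearMap.range Φ) hWcomm
    have hkerΦ : 1 ≤ finrank ℝ (LinearMap.ker Φ) := by
      have := LinearMap.finrank_range_add_finrank_ker Φ
      omega
    obtain ⟨zz, hzz, hzzne⟩ : ∃ zz ∈ LinearMap.ker Φ, zz ≠ (0 : K) := by
      apply Submodule.exists_mem_ne_zero_of_ne_bot
      intro hbot
      rw [hbot, finrank_bot] at hkerΦ
      omega
    set z : G := (zz : G) with hzdef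
    have hz0 : z ≠ 0 := by
      intro h
      exact hzzne (Subtype.ext h)
    have hzK : z ∈ K := zz.2
    have hzD : z ∉ LieSubmodule.toSubmodule D := by
      intro h
      exact hz0 (hKD z hzK h)
    -- K ⊔ D = ⊤
    have hKDsup : K ⊔ LieSubmodule.toSubmodule D = ⊤ := by
      apply Submodule.eq_top_of_finrank_eq
      have hdisj : K ⊓ LieSubmodule.toSubmodule D = ⊥ := by
        rw [eq_bot_iff]
        intro v hv
        have := hKD v hv.1 hv.2
        simp [this]
      have := Submodule.finrank_sup_add_finrank_inf_eq K (LieSubmodule.toSubmodule D)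
      rw [hdisj, finrank_bot, h2'] at this
      have hle := Submodule.finrank_le (K ⊔ LieSubmodule.toSubmodule D)
      omega
    have hzc : ∀ u : G, ⁅u, z⁆ = 0 := by
      intro u
      have hu : u ∈ K ⊔ LieSubmodule.toSubmodule D := by rw [hKDsup]; trivial
      obtain ⟨kk, hkk, d, hd, rfl⟩ := Submodule.mem_sup.mp hu
      rw [add_lie]
      have h1 : ⁅kk, z⁆ = (0 : G) := hKab kk hkk z hzK
      have h2z : ⁅z, d⁆ = (0 : G) := by
        have hΦz : Φ zz = 0 := hzz
        have : ((LieModule.toEnd ℝ G D z ⟨d, hd⟩ : D) : G) = ⁅z, d⁆ := rfl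
        rw [← this]
        rw [show LieModule.toEnd ℝ G D z = Φ zz from rfl, hΦz]
        simp
      have h2dz : ⁅d, z⁆ = (0 : G) := by rw [← lie_skew, h2z, neg_zero]
      rw [h1, h2dz, add_zero]
    exact decomp_of_central (LieSubmodule.toSubmodule D) hbr' hDSne z hz0 hzc hzD
  · -- Case B
    push_neg at hA
    set dx := LieModule.toEnd ℝ G D x with hdxdef
    -- dx is not injective
    have hdxnotinj : ¬ Function.Injective dx := by
      intro hinj
      exact hA x ⟨hinj, (LinearMap.injective_iff_surjective).mp hinj⟩
    have hkerdx : LinearMap.ker dx ≠ ⊥ := by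
      intro hbot
      exact hdxnotinj (LinearMap.ker_eq_bot.mp hbot)
    obtain ⟨c0, hc0ker, hc0ne⟩ := Submodule.exists_mem_ne_zero_of_ne_bot hkerdx
    have hdxne : dx ≠ 0 := by
      intro h0
      exact hδx ⟨1, by rw [pow_one]; exact h0⟩
    have hrangedx : LinearMap.range dx ≠ ⊥ := by
      intro hbot
      apply hdxne
      ext v
      have : dx v ∈ LinearMap.range dx := LinearMap.mem_range_self dx v
      rw [hbot] at this
      simpa using this
    -- finranks
    have hfrk : finrank ℝ (LinearMap.ker dx) = 1 ∧ finrank ℝ (LinearMap.range dx) = 1 := by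
      have hrn := LinearMap.finrank_range_add_finrank_ker dx
      rw [h2] at hrn
      have hk1 : 1 ≤ finrank ℝ (LinearMap.ker dx) := by
        rcases Nat.eq_zero_or_pos (finrank ℝ (LinearMap.ker dx)) with h | h
        · exact absurd (Submodule.finrank_eq_zero.mp h) hkerdx
        · omega
      have hr1 : 1 ≤ finrank ℝ (LinearMap.range dx) := by
        rcases Nat.eq_zero_or_pos (finrank ℝ (LinearMap.range dx)) with h | h
        · exact absurd (Submodule.finrank_eq_zero.mp h) hrangedx
        · omega
      omega
    have hkerspan : LinearMap.ker dx = Submodule.span ℝ {c0} := by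
      symm
      apply Submodule.eq_of_le_of_finrank_le
      · rw [Submodule.span_le, Set.singleton_subset_iff]; exact hc0ker
      · rw [finrank_span_singleton hc0ne, hfrk.1]
    obtain ⟨a0, ha0range, ha0ne⟩ := Submodule.exists_mem_ne_zero_of_ne_bot hrangedx
    have hrangespan : LinearMap.range dx = Submodule.span ℝ {a0} := by
      symm
      apply Submodule.eq_of_le_of_finrank_le
      · rw [Submodule.span_le, Set.singleton_subset_iff]; exact ha0range
      · rw [finrank_span_singleton ha0ne, hfrk.2]
    obtain ⟨lam, hlam⟩ : ∃ lam : ℝ, dx a0 = lam • a0 := by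
      have : dx a0 ∈ LinearMap.range dx := LinearMap.mem_range_self dx a0
      rw [hrangespan] at this
      obtain ⟨t, ht⟩ := Submodule.mem_span_singleton.mp this
      exact ⟨t, ht.symm⟩
    have hlamne : lam ≠ 0 := by
      intro h0
      apply hδx
      refine ⟨2, ?_⟩
      ext v
      rw [pow_two, Module.End.mul_apply]
      have : dx v ∈ LinearMap.range dx := LinearMap.mem_range_self dx v
      rw [hrangespan] at this
      obtain ⟨t, ht⟩ := Submodule.mem_span_singleton.mp this
      rw [← ht, map_smul, hlam, h0, zero_smul, smul_zero]
      simp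
    -- commutation of all dg with dx
    have hcommx : ∀ g : G, LieModule.toEnd ℝ G D g * dx = dx * LieModule.toEnd ℝ G D g := by
      intro g
      have h0 := hδbr g x
      rw [hδ0 _ (hbr g x)] at h0
      rw [hdxdef]
      exact sub_eq_zero.mp h0.symm
    -- action of dg on c0 and a0
    have hdgc0 : ∀ g : G, ∃ μ : ℝ, LieModule.toEnd ℝ G D g c0 = μ • c0 := by
      intro g
      have hmem : LieModule.toEnd ℝ G D g c0 ∈ LinearMap.ker dx := by
        rw [LinearMap.mem_ker]
        have := congrArg (fun F => F c0) (hcommx g)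
        simp only [Module.End.mul_apply] at this
        have hc0z : dx c0 = 0 := hc0ker
        rw [hc0z, map_zero] at this
        exact this.symm
      rw [hkerspan] at hmem
      obtain ⟨t, ht⟩ := Submodule.mem_span_singleton.mp hmem
      exact ⟨t, ht.symm⟩
    have hdga0 : ∀ g : G, ∃ ν : ℝ, LieModule.toEnd ℝ G D g a0 = ν • a0 := by
      intro g
      have hmem : LieModule.toEnd ℝ G D g a0 ∈ LinearMap.range dx := by
        obtain ⟨u0, hu0⟩ := ha0range
        rw [← hu0]
        have := congrArg (fun F => F u0) (hcommx g)
        simp only [Module.End.mul_apply] at this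
        rw [this]
        exact LinearMap.mem_range_self dx _
      rw [hrangespan] at hmem
      obtain ⟨t, ht⟩ := Submodule.mem_span_singleton.mp hmem
      exact ⟨t, ht.symm⟩
    -- independence of c0 a0 in D
    have hliV : ∀ s t : ℝ, s • c0 + t • a0 = 0 → s = 0 ∧ t = 0 := by
      intro s t hst
      have := congrArg dx hst
      rw [map_add, map_smul, map_smul, (show dx c0 = 0 from hc0ker), hlam, map_zero,
        smul_zero, zero_add, smul_smul] at this
      have ht : t = 0 := by
        rcases smul_eq_zero.mp this with h | h
        · rcases mul_eq_zero.mp h with h' | h'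
          · exact h'
          · exact absurd h' hlamne
        · exact absurd h ha0ne
      refine ⟨?_, ht⟩
      rw [ht, zero_smul, add_zero] at hst
      rcases smul_eq_zero.mp hst with h | h
      · exact h
      · exact absurd h hc0ne
    have hspanV : Submodule.span ℝ {c0, a0} = (⊤ : Submodule ℝ D) := by
      apply Submodule.eq_top_of_finrank_eq
      have hli2 : LinearIndependent ℝ ![c0, a0] := by
        rw [LinearIndependent.pair_iff]
        exact hliV
      have hcard := finrank_span_eq_card (R := ℝ) hli2
      have hr : Set.range ![c0, a0] = {c0, a0} := by
        simp only [Matrix.range_cons, Matrix.range_empty, Set.union_empty, Set.union_singleton]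
        exact Set.pair_comm a0 c0
      rw [hr] at hcard
      rw [hcard, h2]
      simp
    -- no element acts on c0 : else build a bijective action
    have hc00 : ∀ g : G, LieModule.toEnd ℝ G D g c0 = 0 := by
      intro g
      obtain ⟨μ, hμ⟩ := hdgc0 g
      rcases eq_or_ne μ 0 with rfl | hμne
      · rw [hμ, zero_smul]
      · exfalso
        obtain ⟨ν, hν⟩ := hdga0 g
        set tt : ℝ := (1 - ν) / lam with htt
        apply hA (g + tt • x)
        have hF : LieModule.toEnd ℝ G D (g + tt • x) = LieModule.toEnd ℝ G D g + tt • dx := by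
          rw [map_add, map_smul, hdxdef]
        have hFc0 : LieModule.toEnd ℝ G D (g + tt • x) c0 = μ • c0 := by
          rw [hF]
          simp only [LinearMap.add_apply, LinearMap.smul_apply]
          rw [hμ, (show dx c0 = 0 from hc0ker), smul_zero, add_zero]
        have hFa0 : LieModule.toEnd ℝ G D (g + tt • x) a0 = a0 := by
          rw [hF]
          simp only [LinearMap.add_apply, LinearMap.smul_apply]
          rw [hν, hlam, smul_smul, ← add_smul]
          have : ν + tt * lam = 1 := by
            rw [htt]; field_simp; ring
          rw [this, one_smul]
        have hinj : Function.Injective (LieModule.toEnd ℝ G D (g + tt • x)) := by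
          rw [← LinearMap.ker_eq_bot]
          rw [eq_bot_iff]
          intro v hv
          have hvtop : v ∈ Submodule.span ℝ {c0, a0} := by rw [hspanV]; trivial
          obtain ⟨s, t, rfl⟩ := Submodule.mem_span_pair.mp hvtop
          rw [LinearMap.mem_ker, map_add, map_smul, map_smul, hFc0, hFa0, smul_smul] at hv
          have hst := hliV (s * μ) t hv
          have hs : s = 0 := by
            rcases mul_eq_zero.mp hst.1 with h | h
            · exact h
            · exact absurd h hμne
          rw [hs, hst.2]
          simp
        exact ⟨hinj, (LinearMap.injective_iff_surjective).mp hinj⟩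
    -- define c and a in G
    set c : G := (c0 : G) with hcdef
    set a : G := (a0 : G) with hadef
    have hcD : c ∈ LieSubmodule.toSubmodule D := c0.2
    have haD : a ∈ LieSubmodule.toSubmodule D := a0.2
    have hcne : c ≠ 0 := fun h => hc0ne (Subtype.ext h)
    have hane : a ≠ 0 := fun h => ha0ne (Subtype.ext h)
    have hgc : ∀ g : G, ⁅g, c⁆ = 0 := by
      intro g
      have : ((LieModule.toEnd ℝ G D g c0 : D) : G) = ⁅g, c⁆ := rfl
      rw [← this, hc00 g]
      rfl
    have hga : ∀ g : G, ∃ μ : ℝ, ⁅g, a⁆ = μ • a := by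
      intro g
      obtain ⟨ν, hν⟩ := hdga0 g
      refine ⟨ν, ?_⟩
      have : ((LieModule.toEnd ℝ G D g a0 : D) : G) = ⁅g, a⁆ := rfl
      rw [← this, hν]
      rfl
    have hxa : ⁅x, a⁆ = lam • a := by
      have : ((dx a0 : D) : G) = ⁅x, a⁆ := rfl
      rw [← this, hlam]
      rfl
    -- coordinate functionals on D extended to G
    obtain ⟨W0, hW0⟩ := Submodule.exists_isCompl (LieSubmodule.toSubmodule D)
    set prj := Submodule.linearProjOfIsCompl _ _ hW0 with hprjdef
    have hprjD : ∀ (v : G) (hv : v ∈ LieSubmodule.toSubmodule D), prj v = ⟨v, hv⟩ := by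
      intro v hv
      exact Submodule.linearProjOfIsCompl_apply_left hW0 ⟨v, hv⟩
    set cD : LieSubmodule.toSubmodule D := ⟨c, hcD⟩ with hcDdef
    set aD : LieSubmodule.toSubmodule D := ⟨a, haD⟩ with haDdef
    have hlica : ∀ s t : ℝ, s • c + t • a = 0 → s = 0 ∧ t = 0 := by
      intro s t hst
      have h1 := congrArg (fun w => ⁅x, w⁆) hst
      simp only [lie_add, lie_smul, lie_zero] at h1
      rw [hgc x, hxa, smul_zero, zero_add, smul_smul] at h1
      have ht : t = 0 := by
        rcases smul_eq_zero.mp h1 with h | h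
        · rcases mul_eq_zero.mp h with h' | h'
          · exact h'
          · exact absurd h' hlamne
        · exact absurd h hane
      refine ⟨?_, ht⟩
      rw [ht, zero_smul, add_zero] at hst
      rcases smul_eq_zero.mp hst with h | h
      · exact h
      · exact absurd h hcne
    have hliD : LinearIndependent ℝ ![cD, aD] := by
      apply LinearIndependent.of_comp (LieSubmodule.toSubmodule D).subtype
      have hcomp : ((LieSubmodule.toSubmodule D).subtype ∘ ![cD, aD]) = ![c, a] := by
        funext i; fin_cases i <;> rfl
      rw [hcomp, LinearIndependent.pair_iff]
      exact hlica
    have hcardD : Fintype.card (Fin 2) = finrank ℝ (LieSubmodule.toSubmodule D) := by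
      rw [h2']; simp
    set bD : Basis (Fin 2) ℝ (LieSubmodule.toSubmodule D) :=
      basisOfLinearIndependentOfCardEqFinrank hliD hcardD with hbDdef
    have hbDc : ⇑bD = ![cD, aD] := coe_basisOfLinearIndependentOfCardEqFinrank hliD hcardD
    have hbD0 : bD 0 = cD := by rw [hbDc]; rfl
    have hbD1 : bD 1 = aD := by rw [hbDc]; rfl
    set xic : G →ₗ[ℝ] ℝ := (bD.coord 0).comp prj with hxicdef
    set xia : G →ₗ[ℝ] ℝ := (bD.coord 1).comp prj with hxiadef
    have hxicc : xic c = 1 := by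
      rw [hxicdef]
      simp only [LinearMap.comp_apply]
      rw [hprjD c hcD, ← hcDdef, ← hbD0]
      simp [Basis.coord_apply]
    have hxica : xic a = 0 := by
      rw [hxicdef]
      simp only [LinearMap.comp_apply]
      rw [hprjD a haD, ← haDdef, ← hbD1]
      simp [Basis.coord_apply]
    have hxiac : xia c = 0 := by
      rw [hxiadef]
      simp only [LinearMap.comp_apply]
      rw [hprjD c hcD, ← hcDdef, ← hbD0]
      simp [Basis.coord_apply]
    have hxiaa : xia a = 1 := by
      rw [hxiadef]
      simp only [LinearMap.comp_apply]
      rw [hprjD a haD, ← haDdef, ← hbD1]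
      simp [Basis.coord_apply]
    have hxi : ∀ v : G, v ∈ LieSubmodule.toSubmodule D → v = xic v • c + xia v • a := by
      intro v hv
      have hrepr := bD.sum_repr ⟨v, hv⟩
      rw [Fin.sum_univ_two, hbD0, hbD1] at hrepr
      have h0 : xic v = bD.repr ⟨v, hv⟩ 0 := by
        rw [hxicdef]
        simp only [LinearMap.comp_apply]
        rw [hprjD v hv]
        simp [Basis.coord_apply]
      have h1 : xia v = bD.repr ⟨v, hv⟩ 1 := by
        rw [hxiadef]
        simp only [LinearMap.comp_apply]
        rw [hprjD v hv]
        simp [Basis.coord_apply]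
      have := congrArg (Subtype.val) hrepr
      simp only [Submodule.coe_add, Submodule.coe_smul] at this
      rw [h0, h1]
      exact this.symm
    -- the linear functional e
    set e : G →ₗ[ℝ] ℝ :=
      xia ∘ₗ ((LieAlgebra.ad ℝ G : G →ₗ⁅ℝ⁆ Module.End ℝ G).toLinearMap.flip a) with hedef
    have heapp : ∀ g : G, e g = xia ⁅g, a⁆ := fun g => rfl
    have he : ∀ g : G, ⁅g, a⁆ = e g • a := by
      intro g
      obtain ⟨μ, hμ⟩ := hga g
      have : e g = μ := by
        show xia ⁅g, a⁆ = μ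
        rw [hμ, map_smul, hxiaa]
        simp
      rw [this, hμ]
    have hexlam : e x = lam := by
      show xia ⁅x, a⁆ = lam
      rw [hxa, map_smul, hxiaa]
      simp
    have hec : e c = 0 := by
      show xia ⁅c, a⁆ = 0
      have : ⁅c, a⁆ = (0 : G) := by
        rw [← lie_skew, hgc a, neg_zero]
      rw [this, map_zero]
    have hea : e a = 0 := by
      show xia ⁅a, a⁆ = 0
      rw [lie_self, map_zero]
    -- normalized element x'
    set x' : G := lam⁻¹ • x with hx'def
    have hex' : e x' = 1 := by
      rw [hx'def, map_smul, hexlam]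
      simp [hlamne]
    -- the linear functional f
    set f : G →ₗ[ℝ] ℝ := xia ∘ₗ (LieAlgebra.ad ℝ G x') with hfdef
    have hfapp : ∀ v : G, f v = xia ⁅x', v⁆ := fun v => rfl
    have hfc : f c = 0 := by
      show xia ⁅x', c⁆ = 0
      rw [hgc x', map_zero]
    have hfa : f a = 1 := by
      show xia ⁅x', a⁆ = 1
      rw [he x', hex', one_smul, hxiaa]
    -- the bilinear form
    set Bb : G →ₗ[ℝ] G →ₗ[ℝ] ℝ := LinearMap.mk₂ ℝ (fun u v => xic ⁅u, v⁆)
      (fun u u' v => by simp [add_lie])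
      (fun t u v => by simp [smul_lie])
      (fun u v v' => by simp [lie_add])
      (fun t u v => by simp [lie_smul]) with hBbdef
    have hBbapp : ∀ u v : G, Bb u v = xic ⁅u, v⁆ := fun u v => rfl
    have hBbalt : ∀ v : G, Bb v v = 0 := by
      intro v
      rw [hBbapp, lie_self, map_zero]
    have hBbskew : ∀ u v : G, Bb u v = - Bb v u := alt_skew Bb hBbalt
    -- coefficient extraction
    have hacoef : ∀ s t : ℝ, s • a = t • a → s = t := by
      intro s t hst
      have : (s - t) • a = 0 := by
        rw [sub_smul, hst, sub_self]
      rcases smul_eq_zero.mp this with h | h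
      · linarith [sub_eq_zero.mp (by linarith [h] : s - t = 0)]
      · exact absurd h hane
    -- J1 : brackets with elements of the bracket
    have hJ1 : ∀ w u v : G, ⁅w, ⁅u, v⁆⁆ = (xia ⁅u, v⁆ * e w) • a := by
      intro w u v
      conv_lhs => rw [hxi ⁅u, v⁆ (hbr' u v)]
      rw [lie_add, lie_smul, lie_smul, hgc w, he w, smul_zero, zero_add, smul_smul]
    -- J2 : the Jacobi consequence
    have hJ2 : ∀ u v : G, xia ⁅u, v⁆ = e u * f v - e v * f u := by
      intro u v
      have hjac := lie_lie u v x'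
      have hLHS : ⁅⁅u, v⁆, x'⁆ = (-(xia ⁅u, v⁆)) • a := by
        rw [← lie_skew, hJ1 x' u v, hex']
        rw [mul_one, neg_smul]
      have hR1 : ⁅u, ⁅v, x'⁆⁆ = (xia ⁅v, x'⁆ * e u) • a := hJ1 u v x'
      have hR2 : ⁅v, ⁅u, x'⁆⁆ = (xia ⁅u, x'⁆ * e v) • a := hJ1 v u x'
      rw [hLHS, hR1, hR2, ← sub_smul] at hjac
      have := hacoef _ _ hjac
      have hvx : xia ⁅v, x'⁆ = - f v := by
        have : ⁅v, x'⁆ = -⁅x', v⁆ := by rw [lie_skew]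
        rw [this, map_neg]
        rfl
      have hux : xia ⁅u, x'⁆ = - f u := by
        have : ⁅u, x'⁆ = -⁅x', u⁆ := by rw [lie_skew]
        rw [this, map_neg]
        rfl
      rw [hvx, hux] at this
      have hfu : xia ⁅u, v⁆ = e u * f v - e v * f u := by linear_combination -this
      exact hfu
    -- the structure identity
    have hstar : ∀ u v : G, ⁅u, v⁆ = Bb u v • c + (e u * f v - e v * f u) • a := by
      intro u v
      rw [hBbapp, ← hJ2]
      exact hxi ⁅u, v⁆ (hbr' u v)
    -- the radical of Bb
    set RG : Submodule ℝ G := LinearMap.ker Bb.flip with hRGdef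
    have hmemRG : ∀ v : G, v ∈ RG ↔ ∀ u : G, Bb u v = 0 := by
      intro v
      rw [hRGdef, LinearMap.mem_ker]
      constructor
      · intro h u
        have := congrArg (fun F => F u) h
        simpa using this
      · intro h
        ext u
        simpa using h u
    have hcRG : c ∈ RG := by
      rw [hmemRG]
      intro u
      rw [hBbapp, hgc u, map_zero]
    have haRG : a ∈ RG := by
      rw [hmemRG]
      intro u
      rw [hBbapp, he u, map_smul, hxica]
      simp
    -- parity argument : finrank RG is odd hence at least 3
    have hRG2 : 2 ≤ finrank ℝ RG := by
      have hle : Submodule.span ℝ {c, a} ≤ RG := by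
        rw [Submodule.span_le]
        rintro w hw
        simp only [Set.mem_insert_iff, Set.mem_singleton_iff] at hw
        rcases hw with rfl | rfl
        · exact hcRG
        · exact haRG
      have := Submodule.finrank_mono hle
      have hsp2 : finrank ℝ (Submodule.span ℝ {c, a}) = 2 := by
        have hli2 : LinearIndependent ℝ ![c, a] := by
          rw [LinearIndependent.pair_iff]; exact hlica
        have hcard := finrank_span_eq_card (R := ℝ) hli2
        have hr : Set.range ![c, a] = {c, a} := by
          simp only [Matrix.range_cons, Matrix.range_empty, Set.union_empty, Set.union_singleton]
          exact Set.pair_comm a c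
        rw [hr] at hcard
        rw [hcard]
        simp
      omega
    obtain ⟨Wc, hWc⟩ := Submodule.exists_isCompl RG
    set BW : Wc →ₗ[ℝ] Wc →ₗ[ℝ] ℝ := LinearMap.mk₂ ℝ (fun p q : Wc => Bb p q)
      (fun p p' q => by simp)
      (fun t p q => by simp)
      (fun p q q' => by simp)
      (fun t p q => by simp) with hBWdef
    have hBWnd : ∀ w : Wc, (∀ q : Wc, BW q w = 0) → w = 0 := by
      intro w hw
      have hwRG : (w : G) ∈ RG := by
        rw [hmemRG]
        intro u
        have hu : u ∈ RG ⊔ Wc := by rw [hWc.codisjoint.eq_top]; trivial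
        obtain ⟨r, hr, wc, hwc, rfl⟩ := Submodule.mem_sup.mp hu
        rw [map_add, LinearMap.add_apply]
        have h1 : Bb r (w : G) = 0 := by
          rw [hBbskew]
          have := (hmemRG r).mp hr (w : G)
          rw [show Bb (w : G) r = 0 from this]
          simp
        have h2 : Bb wc (w : G) = 0 := hw ⟨wc, hwc⟩
        rw [h1, h2, add_zero]
      have : (w : G) ∈ RG ⊓ Wc := ⟨hwRG, w.2⟩
      rw [hWc.disjoint.eq_bot] at this
      exact Subtype.ext this
    have hBWalt : ∀ p : Wc, BW p p = 0 := fun p => hBbalt p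
    have hWceven : Even (finrank ℝ Wc) :=
      even_finrank_of_alt_nondeg (finrank ℝ Wc) Wc _ _ inferInstance rfl BW hBWalt hBWnd
    have hcompl : finrank ℝ RG + finrank ℝ Wc = finrank ℝ G :=
      Submodule.finrank_add_eq_of_isCompl hWc
    have hRG3 : 3 ≤ finrank ℝ RG := by
      obtain ⟨p, hp⟩ := hWceven
      obtain ⟨q, hq⟩ := hodd
      omega
    -- final case split
    by_cases hbeta : ∃ r ∈ RG, e r ≠ 0
    · -- use the ideals ker e ⊓ ker f and span {r, a}
      obtain ⟨r0, hr0RG, hr0e⟩ := hbeta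
      obtain ⟨r, hrRG, hre⟩ : ∃ r : G, r ∈ RG ∧ e r = 1 :=
        ⟨(e r0)⁻¹ • r0, Submodule.smul_mem _ _ hr0RG, by rw [map_smul]; simp [hr0e]⟩
      have hBbr : ∀ u : G, Bb u r = 0 := (hmemRG r).mp hrRG
      apply build_ideals (LinearMap.ker e ⊓ LinearMap.ker f) (Submodule.span ℝ {r, a})
      · -- ideal property of I'
        intro u m hm
        have hme : e m = 0 := hm.1
        have hmf : f m = 0 := hm.2
        have : ⁅u, m⁆ = Bb u m • c := by
          rw [hstar u m, hme, hmf]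
          ring_nf
          rw [zero_smul, add_zero]
        rw [this]
        exact Submodule.smul_mem _ _ ⟨LinearMap.mem_ker.mpr hec, LinearMap.mem_ker.mpr hfc⟩
      · -- ideal property of J'
        intro u m hm
        obtain ⟨s, t, rfl⟩ := Submodule.mem_span_pair.mp hm
        rw [lie_add, lie_smul, lie_smul]
        have h1 : ⁅u, r⁆ = (e u * f r - e r * f u) • a := by
          rw [hstar u r, hBbr u, zero_smul, zero_add]
        have h2 : ⁅u, a⁆ = e u • a := he u
        rw [h1, h2]
        have haJ : a ∈ Submodule.span ℝ {r, a} := Submodule.subset_span (by simp)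
        exact Submodule.add_mem _ (Submodule.smul_mem _ _ (Submodule.smul_mem _ _ haJ))
          (Submodule.smul_mem _ _ (Submodule.smul_mem _ _ haJ))
      · -- I' nonzero
        intro hbot
        have : c ∈ (⊥ : Submodule ℝ G) := by
          rw [← hbot]
          exact ⟨LinearMap.mem_ker.mpr hec, LinearMap.mem_ker.mpr hfc⟩
        exact hcne (by simpa using this)
      · -- J' nonzero
        intro hbot
        have : a ∈ (⊥ : Submodule ℝ G) := by
          rw [← hbot]
          exact Submodule.subset_span (by simp)
        exact hane (by simpa using this)
      · -- trivial intersection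
        rw [eq_bot_iff]
        intro v hv
        have hv1 := hv.1
        obtain ⟨s, t, rfl⟩ := Submodule.mem_span_pair.mp hv.2
        have hve : e (s • r + t • a) = 0 := hv1.1
        have hvf : f (s • r + t • a) = 0 := hv1.2
        rw [map_add, map_smul, map_smul, hre, hea] at hve
        have hs : s = 0 := by simpa using hve
        rw [map_add, map_smul, map_smul, hfa] at hvf
        rw [hs] at hvf ⊢
        have ht : t = 0 := by simpa using hvf
        rw [ht]
        simp
      · -- sup is top
        have hdisj : (LinearMap.ker e ⊓ LinearMap.ker f) ⊓ Submodule.span ℝ {r, a} = ⊥ := by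
          rw [eq_bot_iff]
          intro v hv
          have hv1 := hv.1.1
          obtain ⟨s, t, rfl⟩ := Submodule.mem_span_pair.mp hv.2
          have hve : e (s • r + t • a) = 0 := hv1
          have hvf : f (s • r + t • a) = 0 := hv.1.2
          rw [map_add, map_smul, map_smul, hre, hea] at hve
          have hs : s = 0 := by simpa using hve
          rw [map_add, map_smul, map_smul, hfa] at hvf
          rw [hs] at hvf ⊢
          have ht : t = 0 := by simpa using hvf
          rw [ht]
          simp
        have hkere : finrank ℝ G - 1 ≤ finrank ℝ (LinearMap.ker e) := by
          have := LinearMap.finrank_range_add_finrank_ker e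
          have h1 : finrank ℝ (LinearMap.range e) ≤ 1 := by
            have := Submodule.finrank_le (LinearMap.range e)
            simpa using this
          omega
        have hkerf : finrank ℝ G - 1 ≤ finrank ℝ (LinearMap.ker f) := by
          have := LinearMap.finrank_range_add_finrank_ker f
          have h1 : finrank ℝ (LinearMap.range f) ≤ 1 := by
            have := Submodule.finrank_le (LinearMap.range f)
            simpa using this
          omega
        have hIfr : finrank ℝ G - 2 ≤ finrank ℝ (LinearMap.ker e ⊓ LinearMap.ker f : Submodule ℝ G) := by
          have := Submodule.finrank_sup_add_finrank_inf_eq (LinearMap.ker e) (LinearMap.ker f)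
          have hle := Submodule.finrank_le (LinearMap.ker e ⊔ LinearMap.ker f)
          omega
        have hJfr : finrank ℝ (Submodule.span ℝ {r, a}) = 2 := by
          have hli2 : LinearIndependent ℝ ![r, a] := by
            rw [LinearIndependent.pair_iff]
            intro s t hst
            have h1 := congrArg e hst
            rw [map_add, map_smul, map_smul, hre, hea, map_zero] at h1
            have hs : s = 0 := by simpa using h1
            rw [hs, zero_smul, zero_add] at hst
            rcases smul_eq_zero.mp hst with h | h
            · exact ⟨hs, h⟩
            · exact absurd h hane
          have hcard := finrank_span_eq_card (R := ℝ) hli2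
          have hr : Set.range ![r, a] = {r, a} := by
            simp only [Matrix.range_cons, Matrix.range_empty, Set.union_empty, Set.union_singleton]
            exact Set.pair_comm a r
          rw [hr] at hcard
          rw [hcard]
          simp
        apply Submodule.eq_top_of_finrank_eq
        have hsum := Submodule.finrank_sup_add_finrank_inf_eq
          (LinearMap.ker e ⊓ LinearMap.ker f) (Submodule.span ℝ {r, a})
        rw [hdisj, finrank_bot, hJfr] at hsum
        have hle := Submodule.finrank_le
          ((LinearMap.ker e ⊓ LinearMap.ker f) ⊔ Submodule.span ℝ {r, a})
        omega
    · -- e vanishes on RG : find a central element outside D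
      push_neg at hbeta
      have hRker : finrank ℝ G - 1 ≤ finrank ℝ (LinearMap.ker f) := by
        have := LinearMap.finrank_range_add_finrank_ker f
        have h1 : finrank ℝ (LinearMap.range f) ≤ 1 := by
          have := Submodule.finrank_le (LinearMap.range f)
          simpa using this
        omega
      have hZfr : 2 ≤ finrank ℝ (RG ⊓ LinearMap.ker f : Submodule ℝ G) := by
        have := Submodule.finrank_sup_add_finrank_inf_eq RG (LinearMap.ker f)
        have hle := Submodule.finrank_le (RG ⊔ LinearMap.ker f)
        omega
      have hnotle : ¬ ((RG ⊓ LinearMap.ker f : Submodule ℝ G) ≤ Submodule.span ℝ {c}) := by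
        intro hle
        have := Submodule.finrank_mono hle
        rw [finrank_span_singleton hcne] at this
        omega
      obtain ⟨z, hzZ, hznot⟩ := Set.not_subset.mp (fun hsub => hnotle hsub)
      have hzRG : z ∈ RG := hzZ.1
      have hzf : f z = 0 := hzZ.2
      have hze : e z = 0 := hbeta z hzRG
      have hz0 : z ≠ 0 := by
        intro h
        apply hznot
        rw [h]
        exact Submodule.zero_mem _
      have hzc : ∀ u : G, ⁅u, z⁆ = 0 := by
        intro u
        rw [hstar u z, (hmemRG z).mp hzRG u, hze, hzf]
        ring_nf
        simp
      have hzD : z ∉ LieSubmodule.toSubmodule D := by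
        intro hzmem
        apply hznot
        have hexp := hxi z hzmem
        have hfz := congrArg f hexp.symm
        rw [map_add, map_smul, map_smul, hfc, hfa] at hfz
        have : xia z = 0 := by
          rw [hzf] at hfz
          simpa using hfz
        rw [this, zero_smul, add_zero] at hexp
        rw [hexp]
        exact Submodule.smul_mem _ _ (Submodule.mem_span_singleton_self c)
      exact decomp_of_central (LieSubmodule.toSubmodule D) hbr' hDSne z hz0 hzc hzD
end

section
/- Let G be a real solvable Lie algebra of dimension n ≥ 4 whose derived ideal G¹ = [G,G] is abelian of dimension n − 2, with A_G of dimension 1, and let Y, Z ∈ G be linearly independent elements not in G¹ with a_Y = 0 and A_G = span{a_Z}. If [Y,Z] = 0 or a_Z is a bijective (non-singular) endomorphism of G¹, then G is decomposable; more precisely, there exist Lie ideals I and H of G with I ∩ H = 0 and I + H = G, such that dim I = 1, I is contained in the center of G, dim H = n − 1, and [H,H] = G¹. -/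
open Module

/-- under the hypotheses of Theorem 2 (codimension-2 abelian derived ideal,
`dim A_G = 1`, `a_Y = 0`, `A_G = span {a_Z}`), if `[Y,Z] = 0` or `a_Z` is bijective then
`G` decomposes as a central line plus an `(n-1)`-dimensional ideal `H` with `[H,H] = G¹`. -/
theorem decomposable_of_codim_two_case_A
    (G : Type*) [LieRing G] [LieAlgebra ℝ G] [FiniteDimensional ℝ G]
    [LieAlgebra.IsSolvable G] (n : ℕ) (hn : Module.finrank ℝ G = n) (hn4 : 4 ≤ n)
    (habelian : ∀ u v : G, u ∈ LieAlgebra.derivedSeries ℝ G 1 →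
      v ∈ LieAlgebra.derivedSeries ℝ G 1 → ⁅u, v⁆ = 0)
    (hdim : Module.finrank ℝ (LieAlgebra.derivedSeries ℝ G 1) = n - 2)
    (hA : Module.finrank ℝ (adSpan G) = 1)
    (Y Z : G) (hind : LinearIndependent ℝ ![Y, Z])
    (hY : Y ∉ LieAlgebra.derivedSeries ℝ G 1) (hZ : Z ∉ LieAlgebra.derivedSeries ℝ G 1)
    (haY : adRestrict (LieAlgebra.derivedSeries ℝ G 1) Y = 0)
    (hspan : (adSpan G : Submodule ℝ _) =
      Submodule.span ℝ {adRestrict (LieAlgebra.derivedSeries ℝ G 1) Z})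
    (hcase : ⁅Y, Z⁆ = 0 ∨ Function.Bijective (adRestrict (LieAlgebra.derivedSeries ℝ G 1) Z)) :
    ∃ I H : LieIdeal ℝ G,
      I ⊓ H = ⊥ ∧ I ⊔ H = ⊤ ∧
      Module.finrank ℝ I = 1 ∧ I ≤ LieAlgebra.center ℝ G ∧
      Module.finrank ℝ H = n - 1 ∧
      ⁅H, H⁆ = LieAlgebra.derivedSeries ℝ G 1 := by
  classical
  set D := LieAlgebra.derivedSeries ℝ G 1 with hDdef
  set DS : Submodule ℝ G := (D : Submodule ℝ G) with hDS
  have hbr : ∀ x y : G, ⁅x, y⁆ ∈ D := by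
    intro x y
    rw [hDdef, LieAlgebra.derivedSeries_def, LieAlgebra.derivedSeriesOfIdeal_succ,
      LieAlgebra.derivedSeriesOfIdeal_zero]
    exact LieSubmodule.lie_mem_lie (LieSubmodule.mem_top x) (LieSubmodule.mem_top y)
  have hYlie : ∀ v ∈ D, ⁅Y, v⁆ = 0 := by
    intro v hv
    have h := DFunLike.congr_fun haY (⟨v, hv⟩ : DS)
    exact congrArg Subtype.val h
  have haZne : adRestrict D Z ≠ 0 := by
    intro h
    rw [h, Submodule.span_zero_singleton] at hspan
    rw [adSpan] at hA
    rw [show (Submodule.span ℝ (Set.range fun X : G => adRestrict D X)) = ⊥ from hspan] at hA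
    rw [finrank_bot] at hA
    exact zero_ne_one hA
  have hkey : ∀ a b : ℝ, a • Y + b • Z ∈ D → a = 0 ∧ b = 0 := by
    intro a b hab
    have hb : b = 0 := by
      by_contra hb
      apply haZne
      have h0 : adRestrict D (a • Y + b • Z) = 0 := by
        apply LinearMap.ext; intro u; apply Subtype.ext
        show ⁅a • Y + b • Z, (u : G)⁆ = 0
        exact habelian _ _ hab u.2
      have h1 : adRestrict D (a • Y + b • Z) = b • adRestrict D Z := by
        apply LinearMap.ext; intro u; apply Subtype.ext
        show ⁅a • Y + b • Z, (u : G)⁆ = b • ⁅Z, (u : G)⁆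
        rw [add_lie, smul_lie, smul_lie, hYlie _ u.2, smul_zero, zero_add]
      rw [h1] at h0
      exact (smul_eq_zero.mp h0).resolve_left hb
    refine ⟨?_, hb⟩
    by_contra ha
    apply hY
    have h1 : a • Y ∈ D := by simpa [hb] using hab
    have h2 := D.smul_mem a⁻¹ h1
    rwa [inv_smul_smul₀ ha] at h2
  -- construct Y'
  obtain ⟨Y', huD, hY'Z⟩ : ∃ Y', Y' - Y ∈ D ∧ ⁅Y', Z⁆ = 0 := by
    rcases hcase with h | h
    · exact ⟨Y, by simp [D.zero_mem], h⟩
    · obtain ⟨u, hu⟩ := h.2 (⟨⁅Z, Y⁆, hbr Z Y⟩ : DS)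
      have hu' : ⁅Z, (u : G)⁆ = ⁅Z, Y⁆ := congrArg Subtype.val hu
      refine ⟨Y - (u : G), by simpa using D.neg_mem u.2, ?_⟩
      have hu2 : ⁅(u : G), Z⁆ = ⁅Y, Z⁆ := by rw [← lie_skew, hu', lie_skew]
      rw [sub_lie, hu2, sub_self]
  have hY'lie : ∀ v ∈ D, ⁅Y', v⁆ = 0 := by
    intro v hv
    have h3 : ⁅Y', v⁆ - ⁅Y, v⁆ = 0 := by rw [← sub_lie]; exact habelian _ _ huD hv
    rw [hYlie v hv, sub_zero] at h3; exact h3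
  have hkey' : ∀ a b : ℝ, a • Y' + b • Z ∈ D → a = 0 ∧ b = 0 := by
    intro a b h
    apply hkey a b
    have heq : a • Y + b • Z = (a • Y' + b • Z) - a • (Y' - Y) := by
      rw [smul_sub]; abel
    rw [heq]
    exact D.sub_mem h (D.smul_mem a huD)
  have hY'ne : Y' ∉ D := by
    intro h
    have := (hkey' 1 0 (by simpa using h)).1
    norm_num at this
  have hY'0 : Y' ≠ 0 := fun h => hY'ne (h ▸ D.zero_mem)
  have hZ0 : Z ≠ 0 := fun h => hZ (h ▸ D.zero_mem)
  -- submodules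
  set Isub : Submodule ℝ G := Submodule.span ℝ {Y'} with hIsub
  set Hsub : Submodule ℝ G := Submodule.span ℝ {Z} ⊔ DS with hHsub
  have hinf0 : Isub ⊓ Hsub = ⊥ := by
    rw [eq_bot_iff]
    rintro x ⟨hx1, hx2⟩
    obtain ⟨c, rfl⟩ := Submodule.mem_span_singleton.mp hx1
    rcases eq_or_ne c 0 with rfl | hc
    · simp
    · exfalso
      have hY'H : Y' ∈ Hsub := by
        have h := Hsub.smul_mem c⁻¹ hx2
        rwa [inv_smul_smul₀ hc] at h
      obtain ⟨s, hs, v, hv, hsv⟩ := Submodule.mem_sup.mp hY'H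
      obtain ⟨d, rfl⟩ := Submodule.mem_span_singleton.mp hs
      have hvD : (1:ℝ) • Y' + (-d) • Z ∈ D := by
        have : (1:ℝ) • Y' + (-d) • Z = v := by
          rw [one_smul, neg_smul, ← hsv]; abel
        rw [this]; exact hv
      have := (hkey' 1 (-d) hvD).1
      norm_num at this
  have hZD : Submodule.span ℝ {Z} ⊓ DS = ⊥ := by
    rw [eq_bot_iff]
    rintro x ⟨hx1, hx2⟩
    obtain ⟨c, rfl⟩ := Submodule.mem_span_singleton.mp hx1
    have : c = 0 := (hkey 0 c (by rw [zero_smul, zero_add]; exact hx2)).2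
    simp [this]
  have hfrI : finrank ℝ Isub = 1 := finrank_span_singleton hY'0
  have hfrZ : finrank ℝ (Submodule.span ℝ {Z} : Submodule ℝ G) = 1 := finrank_span_singleton hZ0
  have hfrD : finrank ℝ DS = n - 2 := hdim
  have hfrH : finrank ℝ Hsub = n - 1 := by
    have h := Submodule.finrank_sup_add_finrank_inf_eq (Submodule.span ℝ {Z}) DS
    rw [hZD, hfrZ, hfrD] at h
    simp only [finrank_bot, add_zero] at h
    rw [hHsub]; omega
  have htop : Isub ⊔ Hsub = ⊤ := by
    apply Submodule.eq_top_of_finrank_eq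
    have h := Submodule.finrank_sup_add_finrank_inf_eq Isub Hsub
    rw [hinf0, hfrI, hfrH] at h
    simp only [finrank_bot, add_zero] at h
    rw [hn]; omega
  -- centrality
  have hY'c : ∀ g : G, ⁅g, Y'⁆ = 0 := by
    intro g
    have hg : g ∈ Isub ⊔ Hsub := htop ▸ Submodule.mem_top
    obtain ⟨s, hs, w, hw, rfl⟩ := Submodule.mem_sup.mp hg
    obtain ⟨c, rfl⟩ := Submodule.mem_span_singleton.mp hs
    obtain ⟨t, ht, v, hv, rfl⟩ := Submodule.mem_sup.mp hw
    obtain ⟨d, rfl⟩ := Submodule.mem_span_singleton.mp ht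
    have h1 : ⁅Z, Y'⁆ = 0 := by
      rw [← neg_eq_zero, lie_skew, hY'Z]
    have h2 : ⁅v, Y'⁆ = 0 := by
      rw [← neg_eq_zero, lie_skew, hY'lie v hv]
    rw [add_lie, add_lie, smul_lie, smul_lie, lie_self, h1, h2, smul_zero, smul_zero]
    abel
  have hY'c2 : ∀ g : G, ⁅Y', g⁆ = 0 := by
    intro g; rw [← lie_skew, hY'c g, neg_zero]
  -- Lie ideals
  have hImem : ∀ {x m : G}, m ∈ Isub → ⁅x, m⁆ ∈ Isub := by
    intro x m hm
    obtain ⟨c, rfl⟩ := Submodule.mem_span_singleton.mp hm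
    rw [lie_smul, hY'c x, smul_zero]
    exact Isub.zero_mem
  have hHmem : ∀ {x m : G}, m ∈ Hsub → ⁅x, m⁆ ∈ Hsub := fun {x m} _ =>
    Submodule.mem_sup_right (hbr x m)
  let I : LieIdeal ℝ G := { Isub with lie_mem := hImem }
  let H : LieIdeal ℝ G := { Hsub with lie_mem := hHmem }
  have hIto : (I : Submodule ℝ G) = Isub := rfl
  have hHto : (H : Submodule ℝ G) = Hsub := rfl
  have hsupL : I ⊔ H = ⊤ := by
    rw [← LieSubmodule.toSubmodule_inj, LieSubmodule.sup_toSubmodule,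
      LieSubmodule.top_toSubmodule]
    exact htop
  refine ⟨I, H, ?_, hsupL, hfrI, ?_, hfrH, ?_⟩
  · rw [← LieSubmodule.toSubmodule_inj, LieSubmodule.inf_toSubmodule,
      LieSubmodule.bot_toSubmodule]
    exact hinf0
  · intro x hx
    have hx' : x ∈ Isub := hx
    obtain ⟨c, rfl⟩ := Submodule.mem_span_singleton.mp hx'
    exact (LieModule.mem_maxTrivSubmodule ℝ G G _).mpr fun g => by
      rw [lie_smul, hY'c g, smul_zero]
  · have hIJ : ∀ J : LieIdeal ℝ G, ⁅I, J⁆ = ⊥ := by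
      intro J
      rw [LieSubmodule.lie_eq_bot_iff]
      intro x hx m _
      have hx' : x ∈ Isub := hx
      obtain ⟨c, rfl⟩ := Submodule.mem_span_singleton.mp hx'
      rw [smul_lie, hY'c2 m, smul_zero]
    have hJI : ∀ J : LieIdeal ℝ G, ⁅J, I⁆ = ⊥ := fun J => by
      rw [LieSubmodule.lie_comm]; exact hIJ J
    have hDtop : D = ⁅(⊤ : LieIdeal ℝ G), (⊤ : LieIdeal ℝ G)⁆ := by
      rw [hDdef, LieAlgebra.derivedSeries_def, LieAlgebra.derivedSeriesOfIdeal_succ,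
        LieAlgebra.derivedSeriesOfIdeal_zero]
    rw [hDtop, ← hsupL,
      LieSubmodule.sup_lie, LieSubmodule.lie_sup, LieSubmodule.lie_sup,
      hIJ I, hIJ H, hJI H]
    simp
end

section
/- Let n ≥ 4 and let Ā and B̄ be (n−2)×(n−2) real matrices, each of block form [[A,0],[0,0]] or [[0,A],[0,0]] for some invertible (n−3)×(n−3) real matrix A. Let G_Ā be a real Lie algebra with basis (X₁, …, X_{n−2}, Y, Z) whose Lie brackets are determined by: [X_i, X_j] = 0 for all i, j; [Y, X_i] = 0 for all i; [Z, X_j] = Σ_i Ā_{ij} X_i for all j; and [Z, Y] = X_{n−2}; and let G_B̄ be defined in the same way from B̄. Then G_Ā and G_B̄ are isomorphic as Lie algebras if and only if Ā ∼_p B̄, i.e. there exist c ∈ ℝ∖{0} and an invertible (n−2)×(n−2) real matrix C with cĀ = C⁻¹B̄C. -/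
/-
In both algebras `X₁, …, X_{n-2}, Y` span an abelian ideal complementary to `Z`, so the bracket
is `⁅u, v⁆ = z(u) ⁅Z, v⁆ - z(v) ⁅Z, u⁆` (with `z` the `Z`-coordinate) and everything is encoded in
`ad Z`, which sends `∑ xᵢ Xᵢ + y Y` to `∑ (Ā x + y e_last)ᵢ Xᵢ`. For both block forms the range
of `Ā` is the hyperplane `w_last = 0`, so the derived algebra is exactly the span of the `Xᵢ`.
An isomorphism `e` therefore restricts to it with some invertible matrix `C`, and comparing
`e ⁅Z, X⁆ = ⁅e Z, e X⁆` gives `C Ā = γ B̄ C`, where `γ ≠ 0` is the `Z`-coordinate of `e Z`.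
Conversely, from `c Ā = C⁻¹ B̄ C` one builds the block-triangular linear map `Xⱼ ↦ ∑ Cᵢⱼ Xᵢ`,
`Y ↦ α Y + ∑ vᵢ Xᵢ`, `Z ↦ c⁻¹ Z`; it intertwines `ad Z` with `c⁻¹ ad Z`, which by the bracket
formula makes it a Lie isomorphism.
-/

open Module

/-- The `(k+1)`-square matrix `[[A, 0], [0, 0]]`: `A` occupies rows and columns `0,…,k-1`. -/
def blockDiag {k : ℕ} (A : Matrix (Fin k) (Fin k) ℝ) : Matrix (Fin (k + 1)) (Fin (k + 1)) ℝ :=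
  fun i j => if h : (i : ℕ) < k ∧ (j : ℕ) < k then A ⟨i, h.1⟩ ⟨j, h.2⟩ else 0

/-- The `(k+1)`-square matrix `[[0, A], [0, 0]]`: zero first column, `A` occupies rows
`0,…,k-1` and columns `1,…,k`. -/
def blockShift {k : ℕ} (A : Matrix (Fin k) (Fin k) ℝ) : Matrix (Fin (k + 1)) (Fin (k + 1)) ℝ :=
  fun i j =>
    if h : (i : ℕ) < k ∧ 0 < (j : ℕ) then A ⟨i, h.1⟩ ⟨(j : ℕ) - 1, by
      have := j.isLt; omega⟩ else 0

/-- A basis `(X₁, …, X_{k+1}, Y, Z)` of a real Lie algebra `L` (indexed by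
`Fin (k+1) ⊕ Fin 2`, with `Y = inr 0` and `Z = inr 1`) realizes the Lie algebra `G_Ā`
attached to a `(k+1)`-square matrix `Ā` if `[Xᵢ, Xⱼ] = 0`, `[Y, Xᵢ] = 0`,
`[Z, Xⱼ] = ∑ i, Ā i j • Xᵢ` and `[Z, Y] = X_{k+1}` (the last basis vector). -/
def IsStructureBasis {L : Type*} [LieRing L] [LieAlgebra ℝ L] {k : ℕ}
    (Abar : Matrix (Fin (k + 1)) (Fin (k + 1)) ℝ)
    (B : Basis (Fin (k + 1) ⊕ Fin 2) ℝ L) : Prop :=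
  (∀ i j : Fin (k + 1), ⁅B (Sum.inl i), B (Sum.inl j)⁆ = 0) ∧
  (∀ i : Fin (k + 1), ⁅B (Sum.inr 0), B (Sum.inl i)⁆ = 0) ∧
  (∀ j : Fin (k + 1), ⁅B (Sum.inr 1), B (Sum.inl j)⁆ = ∑ i, Abar i j • B (Sum.inl i)) ∧
  ⁅B (Sum.inr 1), B (Sum.inr 0)⁆ = B (Sum.inl (Fin.last k))

open scoped Matrix

variable {k : ℕ}

lemma blockDiag_mulVec_castSucc (A : Matrix (Fin k) (Fin k) ℝ) (v : Fin (k + 1) → ℝ)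
    (i : Fin k) : (blockDiag A *ᵥ v) i.castSucc = (A *ᵥ Fin.init v) i := by
  simp [Matrix.mulVec, dotProduct, Fin.sum_univ_castSucc, blockDiag, Fin.init]

lemma blockDiag_mulVec_last (A : Matrix (Fin k) (Fin k) ℝ) (v : Fin (k + 1) → ℝ) :
    (blockDiag A *ᵥ v) (Fin.last k) = 0 := by
  simp [Matrix.mulVec, dotProduct, blockDiag]

lemma blockShift_mulVec_castSucc (A : Matrix (Fin k) (Fin k) ℝ) (v : Fin (k + 1) → ℝ)
    (i : Fin k) : (blockShift A *ᵥ v) i.castSucc = (A *ᵥ Fin.tail v) i := by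
  simp [Matrix.mulVec, dotProduct, Fin.sum_univ_succ, blockShift, Fin.tail]

lemma blockShift_mulVec_last (A : Matrix (Fin k) (Fin k) ℝ) (v : Fin (k + 1) → ℝ) :
    (blockShift A *ᵥ v) (Fin.last k) = 0 := by
  simp [Matrix.mulVec, dotProduct, blockShift]

lemma range_mulVec_eq_of_mulVec_castSucc {R : Type*} [CommRing R]
    {M : Matrix (Fin (k + 1)) (Fin (k + 1)) R} {A : Matrix (Fin k) (Fin k) R} (hA : IsUnit A)
    {P : (Fin (k + 1) → R) → Fin k → R} (hP : Function.Surjective P)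
    (hlast : ∀ v, (M *ᵥ v) (Fin.last k) = 0) (hcast : ∀ v i, (M *ᵥ v) i.castSucc = (A *ᵥ P v) i) :
    Set.range M.mulVec = {w | w (Fin.last k) = 0} := by
  ext w
  refine ⟨fun ⟨v, hv⟩ => hv ▸ hlast v, fun hw => ?_⟩
  obtain ⟨v, hv⟩ := (Matrix.mulVec_surjective_iff_isUnit.mpr hA).comp hP (Fin.init w)
  refine ⟨v, funext fun i => Fin.lastCases ?_ (fun i => ?_) i⟩
  · rw [hlast, hw.out]
  · rw [hcast, ← Function.comp_apply (f := A.mulVec), hv, Fin.init]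

lemma range_mulVec_of_block {M : Matrix (Fin (k + 1)) (Fin (k + 1)) ℝ}
    (hM : ∃ A, IsUnit A ∧ (M = blockDiag A ∨ M = blockShift A)) :
    Set.range M.mulVec = {w | w (Fin.last k) = 0} := by
  obtain ⟨A, hA, rfl | rfl⟩ := hM
  · exact range_mulVec_eq_of_mulVec_castSucc hA (fun x => ⟨Fin.snoc x 0, by simp⟩)
      (blockDiag_mulVec_last A) (blockDiag_mulVec_castSucc A)
  · exact range_mulVec_eq_of_mulVec_castSucc hA (fun x => ⟨Fin.cons 0 x, by simp⟩)
      (blockShift_mulVec_last A) (blockShift_mulVec_castSucc A)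

lemma ne_zero_of_range_mulVec {R : Type*} [CommRing R] [Nontrivial R] (hk : 0 < k)
    {M : Matrix (Fin (k + 1)) (Fin (k + 1)) R}
    (hM : Set.range M.mulVec = {w | w (Fin.last k) = 0}) : M ≠ 0 := by
  rintro rfl
  set i : Fin (k + 1) := Fin.castSucc ⟨0, hk⟩
  obtain ⟨v, hv⟩ : Pi.single i (1 : R) ∈ Set.range (0 : Matrix _ _ R).mulVec := by
    rw [hM]
    exact Pi.single_eq_of_ne (Fin.castSucc_ne_last _).symm 1
  simpa [i] using congrFun hv i

/-- `C` maps `range Ā` into `range B̄`, both the hyperplane `w_last = 0`, so the last row of `C`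
vanishes off the diagonal. -/
lemma last_last_ne_zero_of_mul_eq_smul_mul {K : Type*} [Field K]
    {Abar Bbar C : Matrix (Fin (k + 1)) (Fin (k + 1)) K}
    (hA : Set.range Abar.mulVec = {w | w (Fin.last k) = 0})
    (hB : Set.range Bbar.mulVec = {w | w (Fin.last k) = 0}) (hC : IsUnit C) {c : K} (hc : c ≠ 0)
    (hBC : Bbar * C = c • (C * Abar)) : C (Fin.last k) (Fin.last k) ≠ 0 := by
  intro h0
  refine ((Matrix.isUnit_iff_isUnit_det C).mp hC).ne_zero
    (Matrix.det_eq_zero_of_row_eq_zero (Fin.last k) fun j => ?_)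
  rcases eq_or_ne j (Fin.last k) with rfl | hj
  · exact h0
  obtain ⟨v, hv⟩ : Pi.single j 1 ∈ Set.range Abar.mulVec := by
    rw [hA]
    exact Pi.single_eq_of_ne hj.symm 1
  have hCj : C *ᵥ Pi.single j 1 = c⁻¹ • Bbar *ᵥ (C *ᵥ v) := by
    rw [← hv, Matrix.mulVec_mulVec, Matrix.mulVec_mulVec, hBC, Matrix.smul_mulVec,
      inv_smul_smul₀ hc]
  have hlast : Bbar *ᵥ (C *ᵥ v) ∈ {w | w (Fin.last k) = 0} := hB ▸ Set.mem_range_self _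
  have hCj_last := congrFun hCj (Fin.last k)
  rw [Pi.smul_apply, hlast.out, smul_zero, Matrix.mulVec_single_one] at hCj_last
  exact hCj_last

section Coordinates

variable {R V ι : Type*} [CommRing R] [AddCommGroup V] [Module R V] (B : Basis (ι ⊕ Fin 2) R V)

noncomputable def xCoord : V →ₗ[R] ι → R := LinearMap.pi fun i => B.coord (Sum.inl i)

@[simp]
lemma xCoord_apply (v : V) (i : ι) : xCoord B v i = B.repr v (Sum.inl i) := rfl

@[simp]
lemma xCoord_inr (a : Fin 2) : xCoord B (B (Sum.inr a)) = 0 := by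
  ext i
  simp

variable [Fintype ι]

noncomputable def xComb : (ι → R) →ₗ[R] V := Fintype.linearCombination R fun i => B (Sum.inl i)

lemma xComb_apply (x : ι → R) : xComb B x = ∑ i, x i • B (Sum.inl i) :=
  Fintype.linearCombination_apply R _ x

@[simp]
lemma xCoord_xComb (x : ι → R) : xCoord B (xComb B x) = x := by
  classical
  ext i
  simp [xComb_apply, Finsupp.single_apply, Finset.sum_apply']

@[simp]
lemma repr_xComb_inr (x : ι → R) (a : Fin 2) : B.repr (xComb B x) (Sum.inr a) = 0 := by
  simp [xComb_apply]

lemma xComb_single [DecidableEq ι] (i : ι) : xComb B (Pi.single i 1) = B (Sum.inl i) := by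
  simp [xComb_apply, Pi.single_apply]

lemma xComb_injective : Function.Injective (xComb B) :=
  Function.LeftInverse.injective (xCoord_xComb B)

lemma coord_smul_add_xComb_xCoord (v : V) :
    B.coord (Sum.inr 1) v • B (Sum.inr 1) + B.coord (Sum.inr 0) v • B (Sum.inr 0) +
      xComb B (xCoord B v) = v := by
  conv_rhs => rw [← B.sum_repr v, Fintype.sum_sum_type, Fin.sum_univ_two]
  simp only [xComb_apply, Basis.coord_apply, xCoord_apply]
  abel

lemma xComb_xCoord_of_coord_inr (v : V) (hv : ∀ a, B.coord (Sum.inr a) v = 0) :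
    xComb B (xCoord B v) = v := by
  simpa [hv] using coord_smul_add_xComb_xCoord B v

end Coordinates

section TriangularMap

variable {K V₁ V₂ ι : Type*} [Field K] [AddCommGroup V₁] [Module K V₁] [AddCommGroup V₂]
  [Module K V₂] [Fintype ι] (B₁ : Basis (ι ⊕ Fin 2) K V₁) (B₂ : Basis (ι ⊕ Fin 2) K V₂)
  (C : Matrix ι ι K) (v : ι → K) (α β : K)

/-- The linear map with block matrix `[[C, v, 0], [0, α, 0], [0, 0, β]]` in the bases `B₁`,
`B₂`. -/
noncomputable def triangularMap : V₁ →ₗ[K] V₂ :=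
  xComb B₂ ∘ₗ C.mulVecLin ∘ₗ xCoord B₁ +
    (B₁.coord (Sum.inr 0)).smulRight (α • B₂ (Sum.inr 0) + xComb B₂ v) +
    (B₁.coord (Sum.inr 1)).smulRight (β • B₂ (Sum.inr 1))

lemma triangularMap_xComb (x : ι → K) :
    triangularMap B₁ B₂ C v α β (xComb B₁ x) = xComb B₂ (C *ᵥ x) := by
  simp [triangularMap]

lemma xCoord_triangularMap (u : V₁) :
    xCoord B₂ (triangularMap B₁ B₂ C v α β u) =
      C *ᵥ xCoord B₁ u + B₁.coord (Sum.inr 0) u • v := by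
  simp [triangularMap]

lemma coord_triangularMap_inr_zero (u : V₁) :
    B₂.coord (Sum.inr 0) (triangularMap B₁ B₂ C v α β u) = α * B₁.coord (Sum.inr 0) u := by
  simp [triangularMap, mul_comm]

lemma coord_triangularMap_inr_one (u : V₁) :
    B₂.coord (Sum.inr 1) (triangularMap B₁ B₂ C v α β u) = β * B₁.coord (Sum.inr 1) u := by
  simp [triangularMap, mul_comm]

lemma triangularMap_bijective [DecidableEq ι] (hC : IsUnit C) (hα : α ≠ 0) (hβ : β ≠ 0) :
    Function.Bijective (triangularMap B₁ B₂ C v α β) := by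
  set f := triangularMap B₁ B₂ C v α β
  have hX : ∀ x, xComb B₂ x ∈ LinearMap.range f := fun x => by
    obtain ⟨y, rfl⟩ := Matrix.mulVec_surjective_iff_isUnit.mpr hC x
    exact ⟨xComb B₁ y, triangularMap_xComb B₁ B₂ C v α β y⟩
  have hsurj : Function.Surjective f := by
    rw [← LinearMap.range_eq_top, eq_top_iff, ← B₂.span_eq, Submodule.span_le]
    rintro _ ⟨i | a, rfl⟩
    · exact xComb_single B₂ i ▸ hX _
    · have hY : f (B₁ (Sum.inr 0)) = α • B₂ (Sum.inr 0) + xComb B₂ v := by simp [f, triangularMap]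
      have hZ : f (B₁ (Sum.inr 1)) = β • B₂ (Sum.inr 1) := by simp [f, triangularMap]
      fin_cases a
      · have hmem := (LinearMap.range f).smul_mem α⁻¹ ((LinearMap.range f).sub_mem ⟨_, hY⟩ (hX v))
        simpa [inv_smul_smul₀ hα] using hmem
      · simpa [inv_smul_smul₀ hβ] using (LinearMap.range f).smul_mem β⁻¹ ⟨_, hZ⟩
  have := Module.Finite.of_basis B₁
  have := Module.Finite.of_basis B₂
  have hrank : Module.finrank K V₁ = Module.finrank K V₂ := by
    rw [Module.finrank_eq_card_basis B₁, Module.finrank_eq_card_basis B₂]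
  exact ⟨(LinearMap.injective_iff_surjective_of_finrank_eq_finrank hrank).mpr hsurj, hsurj⟩

end TriangularMap

section AbelianHyperplane

variable {R L L' : Type*} [CommRing R] [LieRing L] [LieAlgebra R L] [LieRing L'] [LieAlgebra R L']

lemma lie_eq_of_lie_ker_eq_zero (φ : L →ₗ[R] R) {z : L} (hz : φ z = 1)
    (hker : ∀ u v, φ u = 0 → φ v = 0 → ⁅u, v⁆ = 0) (u v : L) :
    ⁅u, v⁆ = φ u • ⁅z, v⁆ - φ v • ⁅z, u⁆ := by
  have h := hker (u - φ u • z) (v - φ v • z) (by simp [hz]) (by simp [hz])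
  simp only [sub_lie, lie_sub, smul_lie, lie_smul, lie_self, smul_zero, sub_zero] at h
  rw [← lie_skew u z] at h
  linear_combination (norm := module) h

lemma LinearMap.map_lie_of_map_lie_left {φ : L →ₗ[R] R} {φ' : L' →ₗ[R] R} {z : L} {z' : L'}
    (hL : ∀ u v, ⁅u, v⁆ = φ u • ⁅z, v⁆ - φ v • ⁅z, u⁆)
    (hL' : ∀ u v, ⁅u, v⁆ = φ' u • ⁅z', v⁆ - φ' v • ⁅z', u⁆)
    (f : L →ₗ[R] L') (a : R) (hφ : ∀ u, φ' (f u) = a * φ u)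
    (hf : ∀ u, f ⁅z, u⁆ = a • ⁅z', f u⁆) (u v : L) :
    f ⁅u, v⁆ = ⁅f u, f v⁆ := by
  rw [hL, hL' (f u), map_sub, map_smul, map_smul, hf, hf, hφ, hφ, smul_smul, smul_smul,
    mul_comm a, mul_comm a]

end AbelianHyperplane

namespace IsStructureBasis

variable {L : Type*} [LieRing L] [LieAlgebra ℝ L] {M : Matrix (Fin (k + 1)) (Fin (k + 1)) ℝ}
  {B : Basis (Fin (k + 1) ⊕ Fin 2) ℝ L}

lemma lie_Z_xComb (hB : IsStructureBasis M B) (x : Fin (k + 1) → ℝ) :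
    ⁅B (Sum.inr 1), xComb B x⁆ = xComb B (M *ᵥ x) := by
  simp only [xComb_apply, lie_sum, lie_smul, hB.2.2.1, Finset.smul_sum, smul_smul,
    Matrix.mulVec, dotProduct, Finset.sum_smul]
  rw [Finset.sum_comm]
  simp only [mul_comm]

lemma lie_Y_xComb (hB : IsStructureBasis M B) (x : Fin (k + 1) → ℝ) :
    ⁅B (Sum.inr 0), xComb B x⁆ = 0 := by
  simp [xComb_apply, lie_sum, hB.2.1]

lemma lie_xComb_xComb (hB : IsStructureBasis M B) (x y : Fin (k + 1) → ℝ) :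
    ⁅xComb B x, xComb B y⁆ = 0 := by
  simp [xComb_apply, lie_sum, sum_lie, hB.1]

lemma lie_eq_zero_of_coord_eq_zero (hB : IsStructureBasis M B) {u v : L}
    (hu : B.coord (Sum.inr 1) u = 0) (hv : B.coord (Sum.inr 1) v = 0) : ⁅u, v⁆ = 0 := by
  rw [← coord_smul_add_xComb_xCoord B u, ← coord_smul_add_xComb_xCoord B v, hu, hv]
  simp only [zero_smul, zero_add, add_lie, lie_add, smul_lie, lie_smul, lie_self,
    hB.lie_Y_xComb, hB.lie_xComb_xComb, ← lie_skew (xComb B _) (B (Sum.inr 0))]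
  simp

lemma lie_eq (hB : IsStructureBasis M B) (u v : L) :
    ⁅u, v⁆ = B.coord (Sum.inr 1) u • ⁅B (Sum.inr 1), v⁆ -
      B.coord (Sum.inr 1) v • ⁅B (Sum.inr 1), u⁆ :=
  lie_eq_of_lie_ker_eq_zero _ (by simp) (fun _ _ => hB.lie_eq_zero_of_coord_eq_zero) u v

lemma lie_Z_eq (hB : IsStructureBasis M B) (v : L) :
    ⁅B (Sum.inr 1), v⁆ =
      xComb B (M *ᵥ xCoord B v + B.coord (Sum.inr 0) v • Pi.single (Fin.last k) 1) := by
  conv_lhs => rw [← coord_smul_add_xComb_xCoord B v]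
  rw [lie_add, lie_add, lie_smul, lie_smul, lie_self, hB.2.2.2, hB.lie_Z_xComb, map_add,
    map_smul, xComb_single]
  simp only [smul_zero, zero_add]
  abel

lemma lie_xComb (hB : IsStructureBasis M B) (u : L) (x : Fin (k + 1) → ℝ) :
    ⁅u, xComb B x⁆ = B.coord (Sum.inr 1) u • xComb B (M *ᵥ x) := by
  simp [hB.lie_eq u, hB.lie_Z_xComb]

lemma coord_inr_lie (hB : IsStructureBasis M B) (u v : L) (a : Fin 2) :
    B.coord (Sum.inr a) ⁅u, v⁆ = 0 := by
  simp [hB.lie_eq u v, hB.lie_Z_eq]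

lemma exists_lie_Z_eq_xComb (hB : IsStructureBasis M B)
    (hM : Set.range M.mulVec = {w | w (Fin.last k) = 0}) (x : Fin (k + 1) → ℝ) :
    ∃ w, ⁅B (Sum.inr 1), w⁆ = xComb B x := by
  obtain ⟨v, hv⟩ : x - x (Fin.last k) • Pi.single (Fin.last k) 1 ∈ Set.range M.mulVec := by
    rw [hM]
    simp
  refine ⟨x (Fin.last k) • B (Sum.inr 0) + xComb B v, ?_⟩
  rw [hB.lie_Z_eq]
  simp [hv]

end IsStructureBasis

section Isomorphism

variable {L₁ L₂ : Type*} [LieRing L₁] [LieAlgebra ℝ L₁] [LieRing L₂] [LieAlgebra ℝ L₂]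
  {Abar Bbar : Matrix (Fin (k + 1)) (Fin (k + 1)) ℝ}
  {B₁ : Basis (Fin (k + 1) ⊕ Fin 2) ℝ L₁} {B₂ : Basis (Fin (k + 1) ⊕ Fin 2) ℝ L₂}

/-- The `Xᵢ` span the derived algebra, which `e` preserves. -/
lemma exists_matrix_lieEquiv_xComb (hA : Set.range Abar.mulVec = {w | w (Fin.last k) = 0})
    (h₁ : IsStructureBasis Abar B₁) (h₂ : IsStructureBasis Bbar B₂) (e : L₁ ≃ₗ⁅ℝ⁆ L₂) :
    ∃ C : Matrix (Fin (k + 1)) (Fin (k + 1)) ℝ, ∀ x, e (xComb B₁ x) = xComb B₂ (C *ᵥ x) := by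
  refine ⟨LinearMap.toMatrix' (xCoord B₂ ∘ₗ (e : L₁ →ₗ[ℝ] L₂) ∘ₗ xComb B₁), fun x => ?_⟩
  obtain ⟨w, hw⟩ := h₁.exists_lie_Z_eq_xComb hA x
  rw [LinearMap.toMatrix'_mulVec]
  simp only [LinearMap.comp_apply, ← hw, LinearEquiv.coe_coe, LieEquiv.coe_toLinearEquiv,
    LieEquiv.map_lie]
  exact (xComb_xCoord_of_coord_inr B₂ _ (h₂.coord_inr_lie _ _)).symm

lemma propSimilar_of_lieEquiv (hk : 0 < k)
    (hA : Set.range Abar.mulVec = {w | w (Fin.last k) = 0})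
    (h₁ : IsStructureBasis Abar B₁) (h₂ : IsStructureBasis Bbar B₂) (e : L₁ ≃ₗ⁅ℝ⁆ L₂) :
    PropSimilar Abar Bbar := by
  obtain ⟨C, hC⟩ := exists_matrix_lieEquiv_xComb hA h₁ h₂ e
  have hCunit : IsUnit C := Matrix.mulVec_injective_iff_isUnit.mp fun x y hxy =>
    xComb_injective B₁ (e.injective ((hC x).trans ((congrArg _ hxy).trans (hC y).symm)))
  set γ := B₂.coord (Sum.inr 1) (e (B₁ (Sum.inr 1)))
  have hCA : C * Abar = γ • (Bbar * C) := by
    refine Matrix.ext_of_mulVec_single fun j => xComb_injective B₂ ?_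
    rw [← Matrix.mulVec_mulVec, ← hC, ← h₁.lie_Z_xComb, LieEquiv.map_lie, hC, h₂.lie_xComb,
      Matrix.smul_mulVec, Matrix.mulVec_mulVec, map_smul]
  have hγ : γ ≠ 0 := by
    intro hγ
    rw [hγ, zero_smul] at hCA
    exact ne_zero_of_range_mulVec hk hA (hCunit.mul_right_eq_zero.mp hCA)
  refine ⟨γ⁻¹, C, inv_ne_zero hγ, hCunit, ?_⟩
  rw [Matrix.mul_assoc, ← inv_smul_smul₀ hγ (Bbar * C), ← hCA, Matrix.mul_smul,
    Matrix.nonsing_inv_mul_cancel_left _ _ ((Matrix.isUnit_iff_isUnit_det C).mp hCunit)]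

lemma nonempty_lieEquiv_of_propSimilar (hA : Set.range Abar.mulVec = {w | w (Fin.last k) = 0})
    (hB : Set.range Bbar.mulVec = {w | w (Fin.last k) = 0})
    (h₁ : IsStructureBasis Abar B₁) (h₂ : IsStructureBasis Bbar B₂)
    (hsim : PropSimilar Abar Bbar) : Nonempty (L₁ ≃ₗ⁅ℝ⁆ L₂) := by
  obtain ⟨c, C, hc, hC, hsim⟩ := hsim
  have hBC : Bbar * C = c • (C * Abar) := by
    rw [← Matrix.mul_smul, hsim, ← Matrix.mul_assoc,
      Matrix.mul_nonsing_inv_cancel_left _ _ ((Matrix.isUnit_iff_isUnit_det C).mp hC)]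
  -- `α` and `v` are forced by `f ⁅Z, Y⁆ = f X_last`, i.e. `c⁻¹ (α e_last + B̄ v) = C e_last`.
  set α := c * C (Fin.last k) (Fin.last k)
  have hα : α ≠ 0 := mul_ne_zero hc (last_last_ne_zero_of_mul_eq_smul_mul hA hB hC hc hBC)
  obtain ⟨v, hv⟩ :
      c • C.col (Fin.last k) - α • Pi.single (Fin.last k) 1 ∈ Set.range Bbar.mulVec := by
    rw [hB]
    simp [α]
  set f := triangularMap B₁ B₂ C v α c⁻¹
  have hf : ∀ u, f ⁅B₁ (Sum.inr 1), u⁆ = c⁻¹ • ⁅B₂ (Sum.inr 1), f u⁆ := by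
    intro u
    rw [h₁.lie_Z_eq, triangularMap_xComb, h₂.lie_Z_eq, xCoord_triangularMap,
      coord_triangularMap_inr_zero, ← map_smul]
    congr 1
    rw [Matrix.mulVec_add, Matrix.mulVec_add, Matrix.mulVec_smul, Matrix.mulVec_smul, hv,
      Matrix.mulVec_mulVec _ Bbar C, hBC, Matrix.smul_mulVec, Matrix.mulVec_mulVec,
      Matrix.mulVec_single_one]
    match_scalars <;> field_simp
    ring
  let φ : L₁ →ₗ⁅ℝ⁆ L₂ :=
    { f with
      map_lie' := LinearMap.map_lie_of_map_lie_left h₁.lie_eq h₂.lie_eq f c⁻¹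
        (coord_triangularMap_inr_one B₁ B₂ C v α c⁻¹) hf _ _ }
  exact ⟨LieEquiv.ofBijective φ (triangularMap_bijective B₁ B₂ C v α c⁻¹ hC hα (inv_ne_zero hc))⟩

end Isomorphism

/-- the Lie algebras `G_Ā` and `G_B̄` attached to structure matrices `Ā`, `B̄`
of the two block forms are isomorphic iff `Ā ∼ₚ B̄`. -/
theorem lieEquiv_iff_propSimilar
    (n : ℕ) (hn : 4 ≤ n)
    (Abar Bbar : Matrix (Fin (n - 3 + 1)) (Fin (n - 3 + 1)) ℝ)
    (hAbar : ∃ A : Matrix (Fin (n - 3)) (Fin (n - 3)) ℝ, IsUnit A ∧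
      (Abar = blockDiag A ∨ Abar = blockShift A))
    (hBbar : ∃ A : Matrix (Fin (n - 3)) (Fin (n - 3)) ℝ, IsUnit A ∧
      (Bbar = blockDiag A ∨ Bbar = blockShift A))
    (L₁ L₂ : Type*) [LieRing L₁] [LieAlgebra ℝ L₁] [LieRing L₂] [LieAlgebra ℝ L₂]
    (B₁ : Basis (Fin (n - 3 + 1) ⊕ Fin 2) ℝ L₁)
    (B₂ : Basis (Fin (n - 3 + 1) ⊕ Fin 2) ℝ L₂)
    (h₁ : IsStructureBasis Abar B₁) (h₂ : IsStructureBasis Bbar B₂) :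
    Nonempty (L₁ ≃ₗ⁅ℝ⁆ L₂) ↔ PropSimilar Abar Bbar := by
  have hA := range_mulVec_of_block hAbar
  have hB := range_mulVec_of_block hBbar
  exact ⟨fun ⟨e⟩ => propSimilar_of_lieEquiv (by omega) hA h₁ h₂ e,
    nonempty_lieEquiv_of_propSimilar hA hB h₁ h₂⟩
end

section
/- Let m ≥ 1 and let A and B be invertible m×m real matrices. Let Ā and B̄ be the (m+1)×(m+1) matrices with A (respectively B) in the top-left m×m block and zeros elsewhere. Then Ā ∼_p B̄ if and only if A ∼_p B. -/
/-!
Write `Ā = [[A, 0], [0, 0]]` in block form. If `E * (c • Ā) = B̄ * E` with `E = [[D, u], [v, w]]`,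
comparing blocks gives `D * (c • A) = B * D` and `v * (c • A) = 0`; invertibility of `A` kills `v`,
so `E` is block upper triangular and `det E = det D * det w` forces `D` to be invertible.
Conversely, a similarity `C` between `c • A` and `B` extends to `[[C, 0], [0, 1]]`.
-/

lemma propSimilar_iff_semiconjBy {n : ℕ} {M N : Matrix (Fin n) (Fin n) ℝ} :
    PropSimilar M N ↔ ∃ (c : ℝ) (C : Matrix (Fin n) (Fin n) ℝ),
      c ≠ 0 ∧ IsUnit C ∧ SemiconjBy C (c • M) N := by
  refine exists₂_congr fun c C => and_congr_right' <| and_congr_right fun hC => ?_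
  have := hC.invertible
  rw [Matrix.mul_assoc, eq_comm, Matrix.inv_mul_eq_iff_eq_mul_of_invertible, eq_comm]
  rfl

section Blocks

open Matrix

variable {m n : Type*} [Fintype m] [Fintype n]

lemma SemiconjBy.fromBlocks_zero {R : Type*} [NonUnitalNonAssocSemiring R]
    {C A B : Matrix m m R} {C' A' B' : Matrix n n R}
    (h : SemiconjBy C A B) (h' : SemiconjBy C' A' B') :
    SemiconjBy (fromBlocks C 0 0 C') (fromBlocks A 0 0 A') (fromBlocks B 0 0 B') := by
  simp only [SemiconjBy, fromBlocks_multiply, Matrix.mul_zero, Matrix.zero_mul, add_zero, zero_add,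
    h.eq, h'.eq]

lemma SemiconjBy.isUnit_toBlocks₁₁ [DecidableEq m] [DecidableEq n] {K : Type*} [CommRing K]
    {E : Matrix (m ⊕ n) (m ⊕ n) K} {A B : Matrix m m K}
    (hE : IsUnit E) (hA : IsUnit A)
    (h : SemiconjBy E (fromBlocks A 0 0 0) (fromBlocks B 0 0 0)) :
    IsUnit E.toBlocks₁₁ ∧ SemiconjBy E.toBlocks₁₁ A B := by
  rw [← fromBlocks_toBlocks E] at hE h
  simp only [SemiconjBy, fromBlocks_multiply, Matrix.mul_zero, Matrix.zero_mul, add_zero,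
    fromBlocks_inj] at h
  obtain ⟨hD, -, hv, -⟩ := h
  have hv0 : E.toBlocks₂₁ = 0 := by
    rw [← mul_nonsing_inv_cancel_right A E.toBlocks₂₁ ((isUnit_iff_isUnit_det A).mp hA), hv,
      Matrix.zero_mul]
  rw [hv0, isUnit_fromBlocks_zero₂₁] at hE
  exact ⟨hE.1, hD⟩

end Blocks

lemma blockDiag_eq_reindexAlgEquiv {k : ℕ} (A : Matrix (Fin k) (Fin k) ℝ) :
    blockDiag A = Matrix.reindexAlgEquiv ℝ ℝ finSumFinEquiv
      (Matrix.fromBlocks A 0 0 (0 : Matrix (Fin 1) (Fin 1) ℝ)) := by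
  ext i j
  induction i using Fin.addCases <;> induction j using Fin.addCases <;>
    simp [blockDiag]

theorem blockDiag_propSimilar_iff_general
    (m : ℕ) (A B : Matrix (Fin m) (Fin m) ℝ)
    (hA : IsUnit A) :
    PropSimilar (blockDiag A) (blockDiag B) ↔ PropSimilar A B := by
  set Φ := Matrix.reindexAlgEquiv ℝ ℝ (finSumFinEquiv : Fin m ⊕ Fin 1 ≃ _)
  have smul_blockDiag (c : ℝ) : c • blockDiag A = Φ (Matrix.fromBlocks (c • A) 0 0 0) := by
    rw [blockDiag_eq_reindexAlgEquiv, ← map_smul, Matrix.fromBlocks_smul, smul_zero, smul_zero,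
      smul_zero]
  simp only [propSimilar_iff_semiconjBy, smul_blockDiag, blockDiag_eq_reindexAlgEquiv B]
  constructor
  · rintro ⟨c, E, hc, hE, h⟩
    rw [← Φ.apply_symm_apply E, semiconjBy_map_iff Φ.injective] at h
    obtain ⟨hD, hDA⟩ := h.isUnit_toBlocks₁₁ (hE.map Φ.symm) (hA.smul (Units.mk0 c hc))
    exact ⟨c, _, hc, hD, hDA⟩
  · rintro ⟨c, C, hc, hC, h⟩
    refine ⟨c, Φ (Matrix.fromBlocks C 0 0 1), hc, ?_, (h.fromBlocks_zero (.zero_right 1)).map Φ⟩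
    exact (MulEquiv.isUnit_map Φ).mpr (Matrix.isUnit_fromBlocks_zero₂₁.mpr ⟨hC, isUnit_one⟩)

/-- for invertible `m × m` real matrices `A`, `B`, the `(m+1)`-square
matrices `[[A,0],[0,0]]` and `[[B,0],[0,0]]` are proportional similar iff `A ∼ₚ B`. -/
theorem blockDiag_propSimilar_iff
    (m : ℕ) (hm : 1 ≤ m) (A B : Matrix (Fin m) (Fin m) ℝ)
    (hA : IsUnit A) (hB : IsUnit B) :
    PropSimilar (blockDiag A) (blockDiag B) ↔ PropSimilar A B :=
  blockDiag_propSimilar_iff_general m A B hA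
end
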